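/- arXiv:0710.4965 — 7 statements merged into one kernel-verified Lean document; each statement's English description precedes it below -/
import Mathlib

section
/- Let C[n,k] be the number of compositions of n into k pairwise distinct positive parts. Then C[n,k] = C[n-k,k] + k·C[n-k,k-1] for n ≥ 1, k ≥ 1, with C[0,0] = 1 and C[n,k] = 0 for n < 0. -/
/-- The number of compositions of `n` into `k` pairwise distinct positive parts. -/
def distinctCompositions (n k : ℕ) : ℕ :=
  ((Finset.Nat.antidiagonalTuple k n).filter
    (fun v => (∀ i, 0 < v i) ∧ Function.Injective v)).card

/-- `C` extended to integer first argument, vanishing for negative `n`. -/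
def distinctCompositionsZ (n : ℤ) (k : ℕ) : ℕ :=
  if 0 ≤ n then distinctCompositions n.toNat k else 0

lemma dc_zero_of_lt {n k : ℕ} (h : n < k) : distinctCompositions n k = 0 := by
  rw [distinctCompositions, Finset.card_eq_zero, Finset.filter_eq_empty_iff]
  rintro v hv ⟨hpos, hinj⟩
  rw [Finset.Nat.mem_antidiagonalTuple] at hv
  have hk : (k : ℕ) ≤ ∑ i, v i := by
    calc (k : ℕ) = ∑ _i : Fin k, 1 := by simp
    _ ≤ ∑ i, v i := Finset.sum_le_sum (fun i _ => hpos i)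
  omega

lemma sum_sub_one {m : ℕ} (x : Fin m → ℕ) (hx : ∀ j, 1 ≤ x j) :
    ∑ j, (x j - 1) = (∑ j, x j) - m := by
  have h : ∑ j, (x j - 1) + ∑ _j : Fin m, 1 = ∑ j, x j := by
    rw [← Finset.sum_add_distrib]
    exact Finset.sum_congr rfl (fun j _ => by have := hx j; omega)
  simp only [Finset.sum_const, Finset.card_univ, Fintype.card_fin, smul_eq_mul, mul_one] at h
  omega

lemma dc_A (n m : ℕ) :
    (((Finset.Nat.antidiagonalTuple (m+1) (n+(m+1))).filter
      (fun v => (∀ i, 0 < v i) ∧ Function.Injective v)).filter (fun v => ∀ i, v i ≠ 1)).card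
      = distinctCompositions n (m+1) := by
  rw [distinctCompositions]
  apply Finset.card_nbij' (fun v => fun i => v i - 1) (fun w => fun i => w i + 1)
  · intro v hv
    simp only [Finset.mem_coe, Finset.mem_filter, Finset.Nat.mem_antidiagonalTuple] at hv ⊢
    obtain ⟨⟨hsum, hpos, hinj⟩, hne⟩ := hv
    have h2 : ∀ i, 2 ≤ v i := fun i => by have := hpos i; have := hne i; omega
    refine ⟨?_, fun i => by have := h2 i; omega, fun a b hab => ?_⟩
    · rw [sum_sub_one v (fun i => by have := h2 i; omega), hsum]; omega
    · exact hinj (by have := h2 a; have := h2 b; dsimp at hab; omega)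
  · intro w hw
    simp only [Finset.mem_coe, Finset.mem_filter, Finset.Nat.mem_antidiagonalTuple] at hw ⊢
    obtain ⟨hsum, hpos, hinj⟩ := hw
    refine ⟨⟨?_, fun i => Nat.succ_pos _, fun a b hab => hinj (by dsimp at hab; omega)⟩,
      fun i => by have := hpos i; omega⟩
    rw [Finset.sum_add_distrib, hsum]
    simp
  · intro v hv
    simp only [Finset.mem_coe, Finset.mem_filter] at hv
    have hpos := hv.1.2.1
    funext i; have := hpos i; dsimp; omega
  · intro w hw
    funext i; simp

lemma dc_B (n m : ℕ) (i : Fin (m+1)) :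
    (((Finset.Nat.antidiagonalTuple (m+1) (n+(m+1))).filter
      (fun v => (∀ i, 0 < v i) ∧ Function.Injective v)).filter (fun v => v i = 1)).card
      = distinctCompositions n m := by
  rw [distinctCompositions]
  apply Finset.card_nbij' (fun v => fun j => v (i.succAbove j) - 1)
    (fun w => i.insertNth 1 (fun j => w j + 1))
  · intro v hv
    simp only [Finset.mem_coe, Finset.mem_filter, Finset.Nat.mem_antidiagonalTuple] at hv ⊢
    obtain ⟨⟨hsum, hpos, hinj⟩, h1⟩ := hv
    have h2 : ∀ j, 2 ≤ v (i.succAbove j) := by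
      intro j
      have hne : v (i.succAbove j) ≠ 1 := by
        intro h
        exact Fin.succAbove_ne i j (hinj (h.trans h1.symm))
      have := hpos (i.succAbove j); omega
    refine ⟨?_, fun j => by have := h2 j; omega, fun a b hab => ?_⟩
    · rw [sum_sub_one _ (fun j => by have := h2 j; omega)]
      rw [Fin.sum_univ_succAbove v i, h1] at hsum
      omega
    · have hv2 : v (i.succAbove a) = v (i.succAbove b) := by
        have := h2 a; have := h2 b; dsimp at hab; omega
      exact Fin.succAbove_right_injective (hinj hv2)
  · intro w hw
    simp only [Finset.mem_coe, Finset.mem_filter, Finset.Nat.mem_antidiagonalTuple] at hw ⊢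
    obtain ⟨hsum, hpos, hinj⟩ := hw
    refine ⟨⟨?_, ?_, ?_⟩, by simp⟩
    · rw [Fin.sum_univ_succAbove _ i]
      simp only [Fin.insertNth_apply_same, Fin.insertNth_apply_succAbove]
      rw [Finset.sum_add_distrib, hsum]
      simp; omega
    · intro t
      rcases eq_or_ne t i with rfl | ht
      · simp
      · obtain ⟨j, rfl⟩ := Fin.exists_succAbove_eq ht
        simp
    · intro a b hab
      rcases eq_or_ne a i with ha | ha <;> rcases eq_or_ne b i with hb | hb
      · rw [ha, hb]
      · obtain ⟨j, rfl⟩ := Fin.exists_succAbove_eq hb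
        rw [ha] at hab
        simp only [Fin.insertNth_apply_same, Fin.insertNth_apply_succAbove] at hab
        have := hpos j; omega
      · obtain ⟨j, rfl⟩ := Fin.exists_succAbove_eq ha
        rw [hb] at hab
        simp only [Fin.insertNth_apply_same, Fin.insertNth_apply_succAbove] at hab
        have := hpos j; omega
      · obtain ⟨ja, rfl⟩ := Fin.exists_succAbove_eq ha
        obtain ⟨jb, rfl⟩ := Fin.exists_succAbove_eq hb
        simp only [Fin.insertNth_apply_succAbove] at hab
        have hj : ja = jb := hinj (by omega)
        rw [hj]
  · intro v hv
    simp only [Finset.mem_coe, Finset.mem_filter] at hv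
    obtain ⟨⟨_, hpos, hinj⟩, h1⟩ := hv
    funext t
    rcases eq_or_ne t i with rfl | ht
    · simp [h1]
    · obtain ⟨j, rfl⟩ := Fin.exists_succAbove_eq ht
      simp only [Fin.insertNth_apply_succAbove]
      have hne : v (i.succAbove j) ≠ 1 := by
        intro h
        exact Fin.succAbove_ne i j (hinj (h.trans h1.symm))
      have := hpos (i.succAbove j); omega
  · intro w hw
    funext j
    simp

lemma dc_key (n m : ℕ) :
    distinctCompositions (n + (m + 1)) (m + 1) =
      distinctCompositions n (m + 1) + (m + 1) * distinctCompositions n m := by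
  classical
  have hsplit := Finset.card_filter_add_card_filter_not
    (s := (Finset.Nat.antidiagonalTuple (m+1) (n+(m+1))).filter
      (fun v => (∀ i, 0 < v i) ∧ Function.Injective v))
    (p := fun v => ∀ i, v i ≠ 1)
  have hA := dc_A n m
  have hB : ((((Finset.Nat.antidiagonalTuple (m+1) (n+(m+1))).filter
      (fun v => (∀ i, 0 < v i) ∧ Function.Injective v))).filter
        (fun v => ¬ ∀ i, v i ≠ 1)).card = (m+1) * distinctCompositions n m := by
    have heq : (((Finset.Nat.antidiagonalTuple (m+1) (n+(m+1))).filter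
        (fun v => (∀ i, 0 < v i) ∧ Function.Injective v)).filter
          (fun v => ¬ ∀ i, v i ≠ 1)) =
        (Finset.univ : Finset (Fin (m+1))).biUnion
          (fun i => ((Finset.Nat.antidiagonalTuple (m+1) (n+(m+1))).filter
            (fun v => (∀ i, 0 < v i) ∧ Function.Injective v)).filter (fun v => v i = 1)) := by
      ext v
      simp only [Finset.mem_filter, Finset.mem_biUnion, Finset.mem_univ, true_and, not_forall,
        not_not]
      tauto
    rw [heq, Finset.card_biUnion]
    · simp [dc_B n m]
    · intro a _ b _ hab
      simp only [Finset.disjoint_left, Finset.mem_filter, Finset.Nat.mem_antidiagonalTuple]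
      rintro v ⟨⟨_, _, hinj⟩, hva⟩ ⟨_, hvb⟩
      exact hab (hinj (hva.trans hvb.symm))
  have hcard : distinctCompositions (n + (m+1)) (m+1) =
      ((Finset.Nat.antidiagonalTuple (m+1) (n+(m+1))).filter
        (fun v => (∀ i, 0 < v i) ∧ Function.Injective v)).card := rfl
  rw [hcard, ← hsplit, hA, hB]

/-- `C[n,k] = C[n-k,k] + k·C[n-k,k-1]` for `n ≥ 1`, `k ≥ 1`, with `C[0,0] = 1`
and `C[n,k] = 0` for `n < 0`. -/
theorem distinctCompositions_rec :
    distinctCompositionsZ 0 0 = 1 ∧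
    (∀ (n : ℤ) (k : ℕ), n < 0 → distinctCompositionsZ n k = 0) ∧
    (∀ (n : ℤ) (k : ℕ), 1 ≤ n → 1 ≤ k →
      distinctCompositionsZ n k =
        distinctCompositionsZ (n - k) k + k * distinctCompositionsZ (n - k) (k - 1)) := by
  refine ⟨?_, ?_, ?_⟩
  · decide
  · intro n k hn
    rw [distinctCompositionsZ, if_neg (by omega)]
  · intro n k hn hk
    obtain ⟨m, rfl⟩ : ∃ m, k = m + 1 := ⟨k - 1, by omega⟩
    rw [distinctCompositionsZ, if_pos (by omega)]
    by_cases hnk : (m : ℤ) + 1 ≤ n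
    · rw [distinctCompositionsZ, if_pos (by push_cast; omega), distinctCompositionsZ,
        if_pos (by push_cast; omega)]
      have h1 : n.toNat = (n - ((m : ℤ)+1)).toNat + (m + 1) := by omega
      have h2 : ((n : ℤ) - (↑(m+1) : ℤ)).toNat = (n - ((m : ℤ)+1)).toNat := by push_cast; omega
      rw [h1]
      simpa [h2] using dc_key (n - ((m : ℤ)+1)).toNat m
    · have hneg : ¬ (0 : ℤ) ≤ n - (↑(m+1) : ℤ) := by push_cast; omega
      rw [distinctCompositionsZ, if_neg hneg, distinctCompositionsZ, if_neg hneg,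
        dc_zero_of_lt (by omega)]
      simp
end

section
/- For any connected simple graph G on n ≥ 1 vertices, the number of graph compositions C(G) satisfies 2^(n-1) ≤ C(G) ≤ B_n, where B_n is the n-th Bell number. -/
/-- The number of graph compositions of `G`: partitions of the vertex set into
blocks each of which induces a connected subgraph of `G`. -/
noncomputable def numGraphCompositions {V : Type} [Fintype V] [DecidableEq V] (G : SimpleGraph V) : ℕ :=
  Nat.card {P : Finpartition (Finset.univ : Finset V) //
    ∀ s ∈ P.parts, (G.induce (s : Set V)).Connected}

/-- The `n`-th Bell number: the number of set partitions of an `n`-element set. -/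
noncomputable def bell (n : ℕ) : ℕ :=
  Nat.card (Finpartition (Finset.univ : Finset (Fin n)))

open Finset

section Chase
variable {V : Type} [DecidableEq V]

/-- Follow the parent map `p` while inside `S` (and not at the root). -/
noncomputable def chase (root : V) (ρ : V → ℕ) (p : V → V)
    (h : ∀ v, v ≠ root → ρ (p v) < ρ v) (S : Finset V) (v : V) : V :=
  if hv : v ∈ S ∧ v ≠ root then chase root ρ p h S (p v) else v
termination_by ρ v
decreasing_by exact h v hv.2

variable {root : V} {ρ : V → ℕ} {p : V → V} {h : ∀ v, v ≠ root → ρ (p v) < ρ v} {S : Finset V}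

lemma chase_of_neg {v : V} (hv : ¬(v ∈ S ∧ v ≠ root)) : chase root ρ p h S v = v := by
  rw [chase, dif_neg hv]

lemma chase_of_pos {v : V} (hv : v ∈ S ∧ v ≠ root) :
    chase root ρ p h S v = chase root ρ p h S (p v) := by
  rw [chase, dif_pos hv]

lemma rho_chase_le (v : V) : ρ (chase root ρ p h S v) ≤ ρ v := by
  generalize hn : ρ v = n
  induction n using Nat.strong_induction_on generalizing v with
  | _ n ih =>
    by_cases hv : v ∈ S ∧ v ≠ root
    · rw [chase_of_pos hv]
      have := h v hv.2
      calc ρ (chase root ρ p h S (p v)) ≤ ρ (p v) := ih (ρ (p v)) (by omega) _ rfl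
        _ ≤ n := by omega
    · rw [chase_of_neg hv, hn]

lemma chase_fixed (v : V) : ¬(chase root ρ p h S v ∈ S ∧ chase root ρ p h S v ≠ root) := by
  generalize hn : ρ v = n
  induction n using Nat.strong_induction_on generalizing v with
  | _ n ih =>
    by_cases hv : v ∈ S ∧ v ≠ root
    · rw [chase_of_pos hv]
      exact ih (ρ (p v)) (by have := h v hv.2; omega) _ rfl
    · rw [chase_of_neg hv]; exact hv

lemma chase_chase (v : V) :
    chase root ρ p h S (chase root ρ p h S v) = chase root ρ p h S v :=
  chase_of_neg (chase_fixed v)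

end Chase

section Good
variable {V : Type} [Fintype V] [DecidableEq V] (G : SimpleGraph V)

/-- `ρ` is an injective rank function on `s`, and each non-root vertex of `s` has a parent
`p v` in `s` that is adjacent and of smaller rank. -/
def GoodOn (root : V) (ρ : V → ℕ) (p : V → V) (s : Finset V) : Prop :=
  root ∈ s ∧ (∀ v ∈ s, v ≠ root → p v ∈ s ∧ G.Adj (p v) v ∧ ρ (p v) < ρ v) ∧
    (∀ v ∈ s, ∀ w ∈ s, ρ v = ρ w → v = w)

lemma cross {s : Finset V} : ∀ {x y : V}, G.Walk x y → x ∈ s → y ∉ s →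
    ∃ a ∈ s, ∃ b, b ∉ s ∧ G.Adj a b := by
  intro x y w
  induction w with
  | nil => intro hx hy; exact absurd hx hy
  | @cons u v z hadj q ih =>
    intro hx hy
    by_cases hv : v ∈ s
    · exact ih hv hy
    · exact ⟨u, hx, v, hv, hadj⟩

lemma escape (hG : G.Preconnected) (s : Finset V) (hs : s.Nonempty) (hsu : s ≠ univ) :
    ∃ a ∈ s, ∃ b, b ∉ s ∧ G.Adj a b := by
  obtain ⟨a0, ha0⟩ := hs
  obtain ⟨b0, hb0⟩ : ∃ b, b ∉ s := by
    by_contra hc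
    push_neg at hc
    exact hsu (eq_univ_iff_forall.mpr hc)
  obtain ⟨w⟩ := hG a0 b0
  exact cross G w ha0 hb0

lemma grow_all (hG : G.Preconnected) (root : V) :
    ∀ (k : ℕ) (ρ : V → ℕ) (p : V → V) (s : Finset V), GoodOn G root ρ p s →
      Fintype.card V - s.card ≤ k → ∃ ρ' p', GoodOn G root ρ' p' univ := by
  intro k
  induction k with
  | zero =>
    intro ρ p s hs hc
    have hsub : s ⊆ univ := subset_univ s
    have : s = univ := eq_of_subset_of_card_le hsub (by
      have := card_le_card hsub
      simp only [card_univ] at *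
      omega)
    exact ⟨ρ, p, this ▸ hs⟩
  | succ k ih =>
    intro ρ p s hs hc
    by_cases hequ : s = univ
    · exact ⟨ρ, p, hequ ▸ hs⟩
    · obtain ⟨a, ha, b, hb, hab⟩ := escape G hG s ⟨root, hs.1⟩ hequ
      refine ih (Function.update ρ b (s.sup ρ + 1)) (Function.update p b a) (insert b s) ?_ ?_
      · refine ⟨mem_insert_of_mem hs.1, ?_, ?_⟩
        · intro v hv hvroot
          rcases mem_insert.mp hv with rfl | hvs
          · have hab' : a ≠ v := fun hx => hb (hx ▸ ha)
            refine ⟨mem_insert_of_mem (by simpa [Function.update_self, hab'] using ha), ?_, ?_⟩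
            · simpa [Function.update_self, hab'] using hab
            · rw [Function.update_self, Function.update_of_ne hab', Function.update_self]
              have : ρ a ≤ s.sup ρ := le_sup ha
              omega
          · have hvb : v ≠ b := fun hx => hb (hx ▸ hvs)
            obtain ⟨h1, h2, h3⟩ := hs.2.1 v hvs hvroot
            have hpvb : p v ≠ b := fun hx => hb (hx ▸ h1)
            rw [Function.update_of_ne hvb, Function.update_of_ne hpvb, Function.update_of_ne hvb]
            exact ⟨mem_insert_of_mem h1, h2, h3⟩
        · intro v hv w hw hvw
          rcases mem_insert.mp hv with rfl | hvs <;> rcases mem_insert.mp hw with rfl | hws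
          · rfl
          · exfalso
            have hwb : w ≠ v := fun hx => hb (hx ▸ hws)
            rw [Function.update_self, Function.update_of_ne hwb] at hvw
            have : ρ w ≤ s.sup ρ := le_sup hws
            omega
          · exfalso
            have hvb : v ≠ w := fun hx => hb (hx ▸ hvs)
            rw [Function.update_self, Function.update_of_ne hvb] at hvw
            have : ρ v ≤ s.sup ρ := le_sup hvs
            omega
          · have hvb : v ≠ b := fun hx => hb (hx ▸ hvs)
            have hwb : w ≠ b := fun hx => hb (hx ▸ hws)
            rw [Function.update_of_ne hvb, Function.update_of_ne hwb] at hvw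
            exact hs.2.2 v hvs w hws hvw
      · rw [card_insert_of_notMem hb]
        omega

lemma exists_good (hG : G.Connected) :
    ∃ (root : V) (ρ : V → ℕ) (p : V → V), GoodOn G root ρ p univ := by
  have hne : Nonempty V := hG.nonempty
  obtain ⟨root⟩ := hne
  obtain ⟨ρ, p, hgood⟩ := grow_all G hG.preconnected root (Fintype.card V)
    (fun _ => 0) id {root}
    ⟨mem_singleton_self root, fun v hv hvr => absurd (mem_singleton.mp hv) hvr,
      fun v hv w hw _ => by rw [mem_singleton.mp hv, mem_singleton.mp hw]⟩ (by omega)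
  exact ⟨root, ρ, p, hgood⟩

end Good

section KerPartition
variable {V : Type} [Fintype V] [DecidableEq V]

/-- The partition into fibers of `c : V → V`. -/
noncomputable def kerPartition (c : V → V) : Finpartition (univ : Finset V) :=
  @Finpartition.ofSetoid V _ _ (Setoid.ker c)
    (fun a b => decidable_of_iff (c a = c b) Iff.rfl)

lemma mem_kerPartition_part (c : V → V) (a b : V) :
    b ∈ (kerPartition c).part a ↔ c a = c b := by
  rw [kerPartition]
  letI : DecidableRel ⇑(Setoid.ker c) := fun a b => decidable_of_iff (c a = c b) Iff.rfl
  exact Finpartition.mem_part_ofSetoid_iff_rel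

variable {G : SimpleGraph V} {root : V} {ρ : V → ℕ} {p : V → V}

lemma kerPartition_connected (hstep : ∀ v, v ≠ root → ρ (p v) < ρ v)
    (hadj : ∀ v, v ≠ root → G.Adj (p v) v) (S : Finset V) :
    ∀ s ∈ (kerPartition (chase root ρ p hstep S)).parts, (G.induce (s : Set V)).Connected := by
  intro s hs
  set c := chase root ρ p hstep S with hc
  obtain ⟨v, hv⟩ := (kerPartition c).nonempty_of_mem_parts hs
  have hpart : (kerPartition c).part v = s := (kerPartition c).part_eq_of_mem hs hv
  have hmem : ∀ b, b ∈ s ↔ c v = c b := by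
    intro b; rw [← hpart, mem_kerPartition_part]
  have hcv : c v ∈ s := (hmem (c v)).mpr (chase_chase v).symm
  have key : ∀ (n : ℕ) (w : V), ρ w ≤ n → ∀ (hw : w ∈ s),
      (G.induce (s : Set V)).Reachable ⟨c v, by exact_mod_cast hcv⟩ ⟨w, by exact_mod_cast hw⟩ := by
    intro n
    induction n using Nat.strong_induction_on with
    | _ n ih =>
      intro w hwn hw
      by_cases hcond : w ∈ S ∧ w ≠ root
      · have h1 : c w = c (p w) := chase_of_pos hcond
        have h2 : c v = c (p w) := by rw [← h1]; exact (hmem w).mp hw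
        have hpw : p w ∈ s := (hmem _).mpr h2
        have hlt : ρ (p w) < ρ w := hstep w hcond.2
        have hreach := ih (ρ (p w)) (by omega) (p w) le_rfl hpw
        refine hreach.trans (SimpleGraph.Adj.reachable ?_)
        show (G.induce (s : Set V)).Adj ⟨p w, by exact_mod_cast hpw⟩ ⟨w, by exact_mod_cast hw⟩
        exact hadj w hcond.2
      · have hcw : c w = w := chase_of_neg hcond
        have hwcv : c v = w := by rw [← hcw]; exact (hmem w).mp hw
        have : (⟨c v, by exact_mod_cast hcv⟩ : (s : Set V)) = ⟨w, by exact_mod_cast hw⟩ :=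
          Subtype.ext hwcv
        rw [this]
  rw [SimpleGraph.connected_iff]
  refine ⟨?_, ⟨⟨v, by exact_mod_cast hv⟩⟩⟩
  intro x y
  have hx : x.1 ∈ s := by exact_mod_cast x.2
  have hy : y.1 ∈ s := by exact_mod_cast y.2
  have h1 := key (ρ x.1) x.1 le_rfl hx
  have h2 := key (ρ y.1) y.1 le_rfl hy
  exact h1.symm.trans h2

lemma mem_iff_exists_smaller (hstep : ∀ v, v ≠ root → ρ (p v) < ρ v)
    (T : Finset {v : V // v ≠ root}) (t : {v : V // v ≠ root}) :
    t ∈ T ↔ ∃ w ∈ (kerPartition (chase root ρ p hstep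
      (T.map ⟨Subtype.val, Subtype.val_injective⟩))).part t.val, ρ w < ρ t.val := by
  set S := T.map ⟨Subtype.val, Subtype.val_injective⟩ with hS
  set c := chase root ρ p hstep S with hc
  have hmemS : (t : V) ∈ S ↔ t ∈ T := Finset.mem_map' _
  constructor
  · intro ht
    have hcond : (t : V) ∈ S ∧ (t : V) ≠ root := ⟨hmemS.mpr ht, t.2⟩
    refine ⟨c t.val, ?_, ?_⟩
    · rw [mem_kerPartition_part]
      exact (chase_chase _).symm
    · calc ρ (c t.val) = ρ (c (p t.val)) := congrArg ρ (chase_of_pos hcond)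
        _ ≤ ρ (p t.val) := rho_chase_le _
        _ < ρ t.val := hstep _ t.2
  · rintro ⟨w, hw, hlt⟩
    by_contra ht
    have htS : (t : V) ∉ S := fun hx => ht (hmemS.mp hx)
    have hct : c t.val = t.val := chase_of_neg (by tauto)
    rw [mem_kerPartition_part] at hw
    have hle : ρ (c w) ≤ ρ w := rho_chase_le w
    rw [← hw, hct] at hle
    omega

end KerPartition

section Bounds
variable {V : Type} [Fintype V] [DecidableEq V]

lemma lower_bound (G : SimpleGraph V) (hG : G.Connected) :
    2 ^ (Fintype.card V - 1) ≤ numGraphCompositions G := by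
  classical
  obtain ⟨root, ρ, p, hgood⟩ := exists_good G hG
  have hstep : ∀ v, v ≠ root → ρ (p v) < ρ v := fun v hv => (hgood.2.1 v (mem_univ v) hv).2.2
  have hadj : ∀ v, v ≠ root → G.Adj (p v) v := fun v hv => (hgood.2.1 v (mem_univ v) hv).2.1
  set F : Finset {v : V // v ≠ root} → {P : Finpartition (univ : Finset V) //
      ∀ s ∈ P.parts, (G.induce (s : Set V)).Connected} :=
    fun T => ⟨kerPartition (chase root ρ p hstep (T.map ⟨Subtype.val, Subtype.val_injective⟩)),
      kerPartition_connected hstep hadj _⟩ with hF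
  have hFinj : Function.Injective F := by
    intro T1 T2 h12
    have hparts : (F T1).1 = (F T2).1 := congrArg Subtype.val h12
    ext t
    rw [mem_iff_exists_smaller hstep T1 t, mem_iff_exists_smaller hstep T2 t]
    rw [hF] at hparts
    simp only at hparts
    rw [hparts]
  have hcard := Nat.card_le_card_of_injective F hFinj
  have hsub : Fintype.card {v : V // v ≠ root} = Fintype.card V - 1 := by
    have := Fintype.card_subtype_compl (fun v : V => v = root)
    rw [Fintype.card_subtype_eq] at this
    exact this
  calc 2 ^ (Fintype.card V - 1) = Nat.card (Finset {v : V // v ≠ root}) := by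
        rw [Nat.card_eq_fintype_card, Fintype.card_finset, hsub]
    _ ≤ _ := hcard

lemma upper_bound (G : SimpleGraph V) : numGraphCompositions G ≤ bell (Fintype.card V) := by
  classical
  set n := Fintype.card V with hn
  set e : V ≃ Fin n := Fintype.equivFin V with he
  set ι : Finset V ≃o Finset (Fin n) :=
    { toEquiv := e.finsetCongr
      map_rel_iff' := by
        intro s t
        simp only [Equiv.finsetCongr_apply]
        exact Finset.map_subset_map } with hι
  have hu : ι (univ : Finset V) = univ := Finset.map_univ_equiv e
  set g : {P : Finpartition (univ : Finset V) //
      ∀ s ∈ P.parts, (G.induce (s : Set V)).Connected} → Finpartition (univ : Finset (Fin n)) :=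
    fun P => (P.1.map ι).copy hu with hg
  have hginj : Function.Injective g := by
    intro P Q hPQ
    apply Subtype.ext
    have hparts : (P.1.map ι).parts = (Q.1.map ι).parts := by
      have := congrArg Finpartition.parts hPQ
      simpa [hg, Finpartition.copy_parts] using this
    rw [Finpartition.parts_map, Finpartition.parts_map] at hparts
    exact Finpartition.ext (Finset.map_injective _ hparts)
  rw [numGraphCompositions, bell]
  exact Nat.card_le_card_of_injective g hginj

end Bounds

/-- For a connected graph on `n ≥ 1` vertices, `2^(n-1) ≤ C(G) ≤ B_n`. -/
theorem numGraphCompositions_bounds {V : Type} [Fintype V] [DecidableEq V]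
    (G : SimpleGraph V) (hG : G.Connected) (hn : 1 ≤ Fintype.card V) :
    2 ^ (Fintype.card V - 1) ≤ numGraphCompositions G ∧
      numGraphCompositions G ≤ bell (Fintype.card V) :=
  ⟨lower_bound G hG, upper_bound G⟩
end

section
/- Let G be a graph formed from disjoint graphs G_1 and G_2 by adding exactly one edge e between a vertex of G_1 and a vertex of G_2 (so e is a bridge). Then C(G) = 2·C(G_1)·C(G_2). -/
open Finset SimpleGraph

section PartitionSetoid

variable {V : Type} [Fintype V] [DecidableEq V]

/-- The setoid associated to a finpartition of `univ`. -/
def Finpartition.toSetoid (P : Finpartition (univ : Finset V)) : Setoid V where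
  r x y := y ∈ P.part x
  iseqv := by
    constructor
    · intro x; exact P.mem_part (mem_univ x)
    · intro x y h
      have : P.part y = P.part x := P.part_eq_of_mem (P.part_mem.mpr (mem_univ x)) h
      rw [this]; exact P.mem_part (mem_univ x)
    · intro x y z h1 h2
      have : P.part y = P.part x := P.part_eq_of_mem (P.part_mem.mpr (mem_univ x)) h1
      rwa [this] at h2

noncomputable def finpartitionEquivSetoid :
    Finpartition (univ : Finset V) ≃ Setoid V where
  toFun := Finpartition.toSetoid
  invFun s := letI : DecidableRel s.r := fun _ _ => Classical.dec _
    Finpartition.ofSetoid s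
  left_inv P := by
    letI : DecidableRel (Finpartition.toSetoid P).r := fun _ _ => Classical.dec _
    apply Finpartition.ext
    ext t
    constructor
    · intro ht
      simp only [Finpartition.ofSetoid, Finpartition.ofSetSetoid, mem_image, mem_univ, true_and] at ht
      obtain ⟨x, hx⟩ := ht
      have : ({b | (Finpartition.toSetoid P) x b} : Finset V) = P.part x := by
        ext y; simp [Finpartition.toSetoid]; exact Iff.rfl
      rw [this] at hx
      rw [← hx]
      exact P.part_mem.mpr (mem_univ x)
    · intro ht
      obtain ⟨x, hx⟩ := P.nonempty_of_mem_parts ht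
      simp only [Finpartition.ofSetoid, Finpartition.ofSetSetoid, mem_image, mem_univ, true_and]
      refine ⟨x, ?_⟩
      have : ({b | (Finpartition.toSetoid P) x b} : Finset V) = P.part x := by
        ext y; simp [Finpartition.toSetoid]; exact Iff.rfl
      rw [this]
      exact P.part_eq_of_mem ht hx
  right_inv s := by
    letI : DecidableRel s.r := fun _ _ => Classical.dec _
    apply Setoid.ext
    intro x y
    exact Finpartition.mem_part_ofSetoid_iff_rel

lemma numGraphCompositions_eq_card_setoid (G : SimpleGraph V) :
    numGraphCompositions G =
      Nat.card {s : Setoid V // ∀ x, (G.induce {y | s x y}).Connected} := by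
  apply Nat.card_congr
  apply Equiv.subtypeEquiv finpartitionEquivSetoid
  intro P
  constructor
  · intro h x
    have hx : {y | (finpartitionEquivSetoid P) x y} = ((P.part x : Finset V) : Set V) := rfl
    rw [hx]
    exact h _ (P.part_mem.mpr (mem_univ x))
  · intro h t ht
    obtain ⟨x, hx⟩ := P.nonempty_of_mem_parts ht
    have hpx : P.part x = t := P.part_eq_of_mem ht hx
    have := h x
    rwa [show {y | (finpartitionEquivSetoid P) x y} = ((P.part x : Finset V) : Set V) from rfl,
      hpx] at this

end PartitionSetoid


section GraphLemmas

variable {α β : Type} (G₁ : SimpleGraph α) (G₂ : SimpleGraph β) (a : α) (b : β)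

/-- Reachability is preserved by maps that send edges to edges or collapse them. -/
lemma reachable_of_looseHom {V W : Type*} {G : SimpleGraph V} {H : SimpleGraph W} (f : V → W)
    (hf : ∀ u v, G.Adj u v → f u = f v ∨ H.Adj (f u) (f v)) {u v : V}
    (h : G.Reachable u v) : H.Reachable (f u) (f v) := by
  obtain ⟨w⟩ := h
  induction w with
  | nil => exact Reachable.refl _
  | cons hadj _ ih =>
    rcases hf _ _ hadj with heq | hadj'
    · rw [heq]; exact ih
    · exact (hadj'.reachable).trans ih

/-- A walk from a vertex satisfying `p` to one not satisfying `p` crosses. -/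
lemma exists_cross_adj {V : Type*} {G : SimpleGraph V} (p : V → Prop) {u v : V}
    (w : G.Walk u v) (hu : p u) (hv : ¬ p v) :
    ∃ x y, G.Adj x y ∧ p x ∧ ¬ p y := by
  induction w with
  | nil => exact absurd hu hv
  | @cons c d e hadj w ih =>
    by_cases hd : p d
    · exact ih hd hv
    · exact ⟨c, d, hadj, hu, hd⟩

local notation "Gb" => (G₁ ⊕g G₂) ⊔ SimpleGraph.fromEdgeSet {s(Sum.inl a, Sum.inr b)}

lemma gb_adj_inl_inl {x y : α} : (Gb).Adj (Sum.inl x) (Sum.inl y) ↔ G₁.Adj x y := by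
  simp [SimpleGraph.sum_adj, Sym2.eq_iff]

lemma gb_adj_inr_inr {x y : β} : (Gb).Adj (Sum.inr x) (Sum.inr y) ↔ G₂.Adj x y := by
  simp [SimpleGraph.sum_adj, Sym2.eq_iff]

lemma gb_adj_inl_inr {x : α} {y : β} :
    (Gb).Adj (Sum.inl x) (Sum.inr y) ↔ x = a ∧ y = b := by
  simp [SimpleGraph.sum_adj, Sym2.eq_iff]

/-- L1 : purely-left induced subgraphs. -/
lemma induce_inl_connected_iff (T : Set α) :
    ((Gb).induce (Sum.inl '' T)).Connected ↔ (G₁.induce T).Connected := by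
  have hiso : (G₁.induce T) ≃g ((Gb).induce (Sum.inl '' T)) := by
    refine ⟨Equiv.Set.image Sum.inl T Sum.inl_injective, ?_⟩
    intro u v
    have he : ∀ w : T, ((Equiv.Set.image Sum.inl T Sum.inl_injective w :
        (Sum.inl '' T : Set (α ⊕ β))) : α ⊕ β) = Sum.inl (w : α) := fun _ => rfl
    simp only [comap_adj, Function.Embedding.coe_subtype, he]
    exact gb_adj_inl_inl G₁ G₂ a b
  exact hiso.connected_iff.symm

lemma induce_inr_connected_iff (T : Set β) :
    ((Gb).induce (Sum.inr '' T)).Connected ↔ (G₂.induce T).Connected := by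
  have hiso : (G₂.induce T) ≃g ((Gb).induce (Sum.inr '' T)) := by
    refine ⟨Equiv.Set.image Sum.inr T Sum.inr_injective, ?_⟩
    intro u v
    have he : ∀ w : T, ((Equiv.Set.image Sum.inr T Sum.inr_injective w :
        (Sum.inr '' T : Set (α ⊕ β))) : α ⊕ β) = Sum.inr (w : β) := fun _ => rfl
    simp only [comap_adj, Function.Embedding.coe_subtype, he]
    exact gb_adj_inr_inr G₁ G₂ a b
  exact hiso.connected_iff.symm

/-- L2 : gluing two connected pieces along the bridge. -/
lemma glue_connected {T₁ : Set α} {T₂ : Set β} (h₁ : (G₁.induce T₁).Connected)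
    (h₂ : (G₂.induce T₂).Connected) (ha : a ∈ T₁) (hb : b ∈ T₂) :
    ((Gb).induce (Sum.inl '' T₁ ∪ Sum.inr '' T₂)).Connected := by
  set S : Set (α ⊕ β) := Sum.inl '' T₁ ∪ Sum.inr '' T₂ with hS
  have haS : Sum.inl a ∈ S := Or.inl ⟨a, ha, rfl⟩
  have hbS : Sum.inr b ∈ S := Or.inr ⟨b, hb, rfl⟩
  have hreach1 : ∀ x (hx : x ∈ T₁),
      ((Gb).induce S).Reachable ⟨Sum.inl x, Or.inl ⟨x, hx, rfl⟩⟩ ⟨Sum.inl a, haS⟩ := by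
    intro x hx
    have := h₁.preconnected ⟨x, hx⟩ ⟨a, ha⟩
    exact reachable_of_looseHom
      (fun w : T₁ => (⟨Sum.inl w.val, Or.inl ⟨w.val, w.2, rfl⟩⟩ : S))
      (fun u v huv => Or.inr (by
        simp only [comap_adj, Function.Embedding.coe_subtype] at huv ⊢
        exact (gb_adj_inl_inl G₁ G₂ a b).mpr huv)) this
  have hreach2 : ∀ y (hy : y ∈ T₂),
      ((Gb).induce S).Reachable ⟨Sum.inr y, Or.inr ⟨y, hy, rfl⟩⟩ ⟨Sum.inr b, hbS⟩ := by
    intro y hy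
    have := h₂.preconnected ⟨y, hy⟩ ⟨b, hb⟩
    exact reachable_of_looseHom
      (fun w : T₂ => (⟨Sum.inr w.val, Or.inr ⟨w.val, w.2, rfl⟩⟩ : S))
      (fun u v huv => Or.inr (by
        simp only [comap_adj, Function.Embedding.coe_subtype] at huv ⊢
        exact (gb_adj_inr_inr G₁ G₂ a b).mpr huv)) this
  have hab : ((Gb).induce S).Adj ⟨Sum.inl a, haS⟩ ⟨Sum.inr b, hbS⟩ := by
    simp only [comap_adj, Function.Embedding.coe_subtype]
    exact (gb_adj_inl_inr G₁ G₂ a b).mpr ⟨rfl, rfl⟩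
  have key : ∀ z : S, ((Gb).induce S).Reachable z ⟨Sum.inl a, haS⟩ := by
    rintro ⟨z, hz⟩
    rcases hz with ⟨x, hx, rfl⟩ | ⟨y, hy, rfl⟩
    · exact hreach1 x hx
    · exact ((hreach2 y hy).trans hab.symm.reachable)
  haveI : Nonempty S := ⟨⟨Sum.inl a, haS⟩⟩
  exact ⟨fun u v => (key u).trans (key v).symm⟩

/-- L3 : structure of a mixed connected induced subgraph. -/
lemma mixed_connected {S : Set (α ⊕ β)} (hc : ((Gb).induce S).Connected)
    {x : α} {y : β} (hx : Sum.inl x ∈ S) (hy : Sum.inr y ∈ S) :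
    Sum.inl a ∈ S ∧ Sum.inr b ∈ S ∧ (G₁.induce (Sum.inl ⁻¹' S)).Connected ∧
      (G₂.induce (Sum.inr ⁻¹' S)).Connected := by
  obtain ⟨w⟩ := hc.preconnected ⟨Sum.inl x, hx⟩ ⟨Sum.inr y, hy⟩
  obtain ⟨u, v, huv, hu, hv⟩ :=
    exists_cross_adj (fun z : S => (z : α ⊕ β).isLeft) w rfl (by simp)
  -- identify the crossing edge
  obtain ⟨u, hus⟩ := u
  obtain ⟨v, hvs⟩ := v
  simp only [comap_adj, Function.Embedding.coe_subtype] at huv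
  cases u with
  | inr u => simp at hu
  | inl u =>
    cases v with
    | inl v => simp at hv
    | inr v =>
      obtain ⟨h1, h2⟩ := (gb_adj_inl_inr G₁ G₂ a b).mp huv
      rw [h1] at hus
      rw [h2] at hvs
      refine ⟨hus, hvs, ?_, ?_⟩
      · -- project to the left
        haveI : Nonempty (Sum.inl ⁻¹' S : Set α) := ⟨⟨a, hus⟩⟩
        refine ⟨fun p q => ?_⟩
        have hr : ((Gb).induce S).Reachable ⟨Sum.inl p.val, p.2⟩ ⟨Sum.inl q.val, q.2⟩ :=
          hc.preconnected _ _
        have := reachable_of_looseHom (H := G₁.induce (Sum.inl ⁻¹' S))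
          (fun z : S => match z with
            | ⟨Sum.inl c, hcS⟩ => (⟨c, hcS⟩ : (Sum.inl ⁻¹' S : Set α))
            | ⟨Sum.inr _, _⟩ => (⟨a, hus⟩ : (Sum.inl ⁻¹' S : Set α)))
          ?_ hr
        · exact this
        · rintro ⟨u', hu'⟩ ⟨v', hv'⟩ huv'
          simp only [comap_adj, Function.Embedding.coe_subtype] at huv'
          cases u' with
          | inl u' =>
            cases v' with
            | inl v' =>
              right
              simp only [comap_adj, Function.Embedding.coe_subtype]
              exact (gb_adj_inl_inl G₁ G₂ a b).mp huv'
            | inr v' =>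
              left
              obtain ⟨rfl, rfl⟩ := (gb_adj_inl_inr G₁ G₂ a b).mp huv'
              rfl
          | inr u' =>
            cases v' with
            | inl v' =>
              left
              obtain ⟨rfl, rfl⟩ := (gb_adj_inl_inr G₁ G₂ a b).mp huv'.symm
              rfl
            | inr v' => left; rfl
      · -- project to the right
        haveI : Nonempty (Sum.inr ⁻¹' S : Set β) := ⟨⟨b, hvs⟩⟩
        refine ⟨fun p q => ?_⟩
        have hr : ((Gb).induce S).Reachable ⟨Sum.inr p.val, p.2⟩ ⟨Sum.inr q.val, q.2⟩ :=
          hc.preconnected _ _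
        have := reachable_of_looseHom (H := G₂.induce (Sum.inr ⁻¹' S))
          (fun z : S => match z with
            | ⟨Sum.inr c, hcS⟩ => (⟨c, hcS⟩ : (Sum.inr ⁻¹' S : Set β))
            | ⟨Sum.inl _, _⟩ => (⟨b, hvs⟩ : (Sum.inr ⁻¹' S : Set β)))
          ?_ hr
        · exact this
        · rintro ⟨u', hu'⟩ ⟨v', hv'⟩ huv'
          simp only [comap_adj, Function.Embedding.coe_subtype] at huv'
          cases u' with
          | inr u' =>
            cases v' with
            | inr v' =>
              right
              simp only [comap_adj, Function.Embedding.coe_subtype]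
              exact (gb_adj_inr_inr G₁ G₂ a b).mp huv'
            | inl v' =>
              left
              obtain ⟨rfl, rfl⟩ := (gb_adj_inl_inr G₁ G₂ a b).mp huv'.symm
              rfl
          | inl u' =>
            cases v' with
            | inr v' =>
              left
              obtain ⟨rfl, rfl⟩ := (gb_adj_inl_inr G₁ G₂ a b).mp huv'
              rfl
            | inl v' => left; rfl

end GraphLemmas


section GlueDef

variable {α β : Type} (G₁ : SimpleGraph α) (G₂ : SimpleGraph β) (a : α) (b : β)

def glueSetoid (ε : Bool) (s₁ : Setoid α) (s₂ : Setoid β) : Setoid (α ⊕ β) where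
  r z w := match z, w with
    | .inl x, .inl y => s₁ x y
    | .inr x, .inr y => s₂ x y
    | .inl x, .inr y => ε = true ∧ s₁ a x ∧ s₂ b y
    | .inr x, .inl y => ε = true ∧ s₁ a y ∧ s₂ b x
  iseqv := by
    constructor
    · rintro (x|x)
      · exact Setoid.refl x
      · exact Setoid.refl x
    · rintro (x|x) (y|y) h
      · exact Setoid.symm h
      · exact h
      · exact h
      · exact Setoid.symm h
    · rintro (x|x) (y|y) (z|z) h1 h2
      · exact Setoid.trans h1 h2
      · exact ⟨h2.1, Setoid.trans h2.2.1 (Setoid.symm h1), h2.2.2⟩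
      · exact Setoid.trans (Setoid.symm h1.2.1) h2.2.1
      · exact ⟨h1.1, h1.2.1, Setoid.trans h1.2.2 h2⟩
      · exact ⟨h1.1, Setoid.trans h1.2.1 h2, h1.2.2⟩
      · exact Setoid.trans (Setoid.symm h1.2.2) h2.2.2
      · exact ⟨h2.1, h2.2.1, Setoid.trans h2.2.2 (Setoid.symm h1)⟩
      · exact Setoid.trans h1 h2

variable {ε : Bool} {s₁ : Setoid α} {s₂ : Setoid β}

lemma glue_inl_inl {x y : α} : (glueSetoid a b ε s₁ s₂) (Sum.inl x) (Sum.inl y) ↔ s₁ x y :=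
  Iff.rfl
lemma glue_inr_inr {x y : β} : (glueSetoid a b ε s₁ s₂) (Sum.inr x) (Sum.inr y) ↔ s₂ x y :=
  Iff.rfl
lemma glue_inl_inr {x : α} {y : β} :
    (glueSetoid a b ε s₁ s₂) (Sum.inl x) (Sum.inr y) ↔ ε = true ∧ s₁ a x ∧ s₂ b y := Iff.rfl
lemma glue_inr_inl {x : β} {y : α} :
    (glueSetoid a b ε s₁ s₂) (Sum.inr x) (Sum.inl y) ↔ ε = true ∧ s₁ a y ∧ s₂ b x := Iff.rfl

end GlueDef


section BridgeMain

variable {α β : Type} (G₁ : SimpleGraph α) (G₂ : SimpleGraph β) (a : α) (b : β)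

local notation "Gb" => (G₁ ⊕g G₂) ⊔ SimpleGraph.fromEdgeSet {s(Sum.inl a, Sum.inr b)}

variable {ε : Bool} {s₁ : Setoid α} {s₂ : Setoid β}

lemma glue_valid (hs₁ : ∀ x, (G₁.induce {y | s₁ x y}).Connected)
    (hs₂ : ∀ x, (G₂.induce {y | s₂ x y}).Connected) :
    ∀ z, ((Gb).induce {w | (glueSetoid a b ε s₁ s₂) z w}).Connected := by
  rintro (x|x)
  · by_cases h : ε = true ∧ s₁ a x
    · have hset : {w | (glueSetoid a b ε s₁ s₂) (Sum.inl x) w} =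
          Sum.inl '' {y | s₁ x y} ∪ Sum.inr '' {y | s₂ b y} := by
        ext (w|w)
        · simp only [Set.mem_setOf_eq, Set.mem_union, Set.mem_image, glue_inl_inl]
          constructor
          · intro hw; exact Or.inl ⟨w, hw, rfl⟩
          · rintro (⟨y, hy, hyw⟩ | ⟨y, hy, hyw⟩)
            · cases hyw; exact hy
            · exact absurd hyw (by simp)
        · simp only [Set.mem_setOf_eq, Set.mem_union, Set.mem_image, glue_inl_inr]
          constructor
          · intro hw; exact Or.inr ⟨w, hw.2.2, rfl⟩
          · rintro (⟨y, hy, hyw⟩ | ⟨y, hy, hyw⟩)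
            · exact absurd hyw (by simp)
            · cases hyw; exact ⟨h.1, h.2, hy⟩
      rw [hset]
      exact glue_connected G₁ G₂ a b (hs₁ x) (hs₂ b) (Setoid.symm h.2) (Setoid.refl b)
    · have hset : {w | (glueSetoid a b ε s₁ s₂) (Sum.inl x) w} = Sum.inl '' {y | s₁ x y} := by
        ext (w|w)
        · simp only [Set.mem_setOf_eq, Set.mem_image, glue_inl_inl]
          constructor
          · intro hw; exact ⟨w, hw, rfl⟩
          · rintro ⟨y, hy, hyw⟩; cases hyw; exact hy
        · simp only [Set.mem_setOf_eq, Set.mem_image, glue_inl_inr]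
          constructor
          · intro hw; exact absurd ⟨hw.1, hw.2.1⟩ h
          · rintro ⟨y, hy, hyw⟩; exact absurd hyw (by simp)
      rw [hset]
      exact (induce_inl_connected_iff G₁ G₂ a b _).mpr (hs₁ x)
  · by_cases h : ε = true ∧ s₂ b x
    · have hset : {w | (glueSetoid a b ε s₁ s₂) (Sum.inr x) w} =
          Sum.inl '' {y | s₁ a y} ∪ Sum.inr '' {y | s₂ x y} := by
        ext (w|w)
        · simp only [Set.mem_setOf_eq, Set.mem_union, Set.mem_image, glue_inr_inl]
          constructor
          · intro hw; exact Or.inl ⟨w, hw.2.1, rfl⟩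
          · rintro (⟨y, hy, hyw⟩ | ⟨y, hy, hyw⟩)
            · cases hyw; exact ⟨h.1, hy, h.2⟩
            · exact absurd hyw (by simp)
        · simp only [Set.mem_setOf_eq, Set.mem_union, Set.mem_image, glue_inr_inr]
          constructor
          · intro hw; exact Or.inr ⟨w, hw, rfl⟩
          · rintro (⟨y, hy, hyw⟩ | ⟨y, hy, hyw⟩)
            · exact absurd hyw (by simp)
            · cases hyw; exact hy
      rw [hset]
      exact glue_connected G₁ G₂ a b (hs₁ a) (hs₂ x) (Setoid.refl a) (Setoid.symm h.2)
    · have hset : {w | (glueSetoid a b ε s₁ s₂) (Sum.inr x) w} = Sum.inr '' {y | s₂ x y} := by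
        ext (w|w)
        · simp only [Set.mem_setOf_eq, Set.mem_image, glue_inr_inl]
          constructor
          · intro hw; exact absurd ⟨hw.1, hw.2.2⟩ h
          · rintro ⟨y, hy, hyw⟩; exact absurd hyw (by simp)
        · simp only [Set.mem_setOf_eq, Set.mem_image, glue_inr_inr]
          constructor
          · intro hw; exact ⟨w, hw, rfl⟩
          · rintro ⟨y, hy, hyw⟩; cases hyw; exact hy
      rw [hset]
      exact (induce_inr_connected_iff G₁ G₂ a b _).mpr (hs₂ x)



variable {s : Setoid (α ⊕ β)}

lemma comap_inl_valid (hs : ∀ z, ((Gb).induce {w | s z w}).Connected) :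
    ∀ x, (G₁.induce {y | (Setoid.comap Sum.inl s) x y}).Connected := by
  intro x
  set S : Set (α ⊕ β) := {w | s (Sum.inl x) w} with hS
  have hpre : {y | (Setoid.comap Sum.inl s) x y} = Sum.inl ⁻¹' S := rfl
  rw [hpre]
  by_cases h : ∃ y, Sum.inr y ∈ S
  · obtain ⟨y, hy⟩ := h
    exact (mixed_connected G₁ G₂ a b (hs (Sum.inl x))
      (show Sum.inl x ∈ S from Setoid.refl _) hy).2.2.1
  · have himg : Sum.inl '' (Sum.inl ⁻¹' S) = S := by
      ext (w|w)
      · simp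
      · simpa using fun hw => h ⟨w, hw⟩
    refine (induce_inl_connected_iff G₁ G₂ a b _).mp ?_
    rw [himg]
    exact hs (Sum.inl x)

lemma comap_inr_valid (hs : ∀ z, ((Gb).induce {w | s z w}).Connected) :
    ∀ x, (G₂.induce {y | (Setoid.comap Sum.inr s) x y}).Connected := by
  intro x
  set S : Set (α ⊕ β) := {w | s (Sum.inr x) w} with hS
  have hpre : {y | (Setoid.comap Sum.inr s) x y} = Sum.inr ⁻¹' S := rfl
  rw [hpre]
  by_cases h : ∃ y, Sum.inl y ∈ S
  · obtain ⟨y, hy⟩ := h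
    exact (mixed_connected G₁ G₂ a b (hs (Sum.inr x)) hy
      (show Sum.inr x ∈ S from Setoid.refl _)).2.2.2
  · have himg : Sum.inr '' (Sum.inr ⁻¹' S) = S := by
      ext (w|w)
      · simpa using fun hw => h ⟨w, hw⟩
      · simp
    refine (induce_inr_connected_iff G₁ G₂ a b _).mp ?_
    rw [himg]
    exact hs (Sum.inr x)

lemma cross_of_valid (hs : ∀ z, ((Gb).induce {w | s z w}).Connected)
    {x : α} {y : β} (h : s (Sum.inl x) (Sum.inr y)) :
    s (Sum.inl x) (Sum.inl a) ∧ s (Sum.inl x) (Sum.inr b) := by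
  have := mixed_connected G₁ G₂ a b (hs (Sum.inl x))
    (show Sum.inl x ∈ {w | s (Sum.inl x) w} from Setoid.refl _) h
  exact ⟨this.1, this.2.1⟩



open Classical in
noncomputable def mainEquiv :
    {s : Setoid (α ⊕ β) // ∀ z, ((Gb).induce {w | s z w}).Connected} ≃
      Bool × {s₁ : Setoid α // ∀ x, (G₁.induce {y | s₁ x y}).Connected} ×
        {s₂ : Setoid β // ∀ x, (G₂.induce {y | s₂ x y}).Connected} where
  toFun s := ⟨decide (s.1 (Sum.inl a) (Sum.inr b)),
    ⟨Setoid.comap Sum.inl s.1, comap_inl_valid G₁ G₂ a b s.2⟩,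
    ⟨Setoid.comap Sum.inr s.1, comap_inr_valid G₁ G₂ a b s.2⟩⟩
  invFun t := ⟨glueSetoid a b t.1 t.2.1.1 t.2.2.1,
    glue_valid G₁ G₂ a b t.2.1.2 t.2.2.2⟩
  left_inv := by
    rintro ⟨s, hs⟩
    apply Subtype.ext
    apply Setoid.ext
    rintro (x|x) (y|y)
    · rw [glue_inl_inl]; exact Setoid.comap_rel _ _ _ _
    · rw [glue_inl_inr]
      simp only [decide_eq_true_eq, Setoid.comap_rel]
      constructor
      · rintro ⟨hab, hax, hby⟩
        exact Setoid.trans (Setoid.trans (Setoid.symm hax) hab) hby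
      · intro h
        obtain ⟨ha', hb'⟩ := cross_of_valid G₁ G₂ a b hs h
        refine ⟨Setoid.trans (Setoid.symm ha') hb', Setoid.symm ha', ?_⟩
        exact Setoid.trans (Setoid.symm hb') h
    · rw [glue_inr_inl]
      simp only [decide_eq_true_eq, Setoid.comap_rel]
      constructor
      · rintro ⟨hab, hay, hbx⟩
        exact Setoid.symm (Setoid.trans (Setoid.trans (Setoid.symm hay) hab) hbx)
      · intro h
        obtain ⟨ha', hb'⟩ := cross_of_valid G₁ G₂ a b hs (Setoid.symm h)
        refine ⟨Setoid.trans (Setoid.symm ha') hb', Setoid.symm ha', ?_⟩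
        exact Setoid.trans (Setoid.symm hb') (Setoid.symm h)
    · rw [glue_inr_inr]; exact Setoid.comap_rel _ _ _ _
  right_inv := by
    rintro ⟨ε, ⟨t₁, h₁⟩, ⟨t₂, h₂⟩⟩
    refine Prod.ext ?_ (Prod.ext ?_ ?_)
    · have hrel : (glueSetoid a b ε t₁ t₂) (Sum.inl a) (Sum.inr b) ↔ ε = true := by
        rw [glue_inl_inr]
        exact ⟨fun h => h.1, fun h => ⟨h, Setoid.refl a, Setoid.refl b⟩⟩
      show decide _ = ε
      rcases Bool.eq_false_or_eq_true ε with hε | hε <;> subst hε <;> simp [hrel]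
    · apply Subtype.ext
      apply Setoid.ext
      intro x y
      rw [Setoid.comap_rel, glue_inl_inl]
    · apply Subtype.ext
      apply Setoid.ext
      intro x y
      rw [Setoid.comap_rel, glue_inr_inr]



end BridgeMain

/-- If `G` is obtained from disjoint graphs `G₁`, `G₂` by adding exactly one
edge between a vertex of `G₁` and a vertex of `G₂`, then `C(G) = 2·C(G₁)·C(G₂)`. -/
theorem numGraphCompositions_bridge {α β : Type} [Fintype α] [Fintype β]
    [DecidableEq α] [DecidableEq β] (G₁ : SimpleGraph α) (G₂ : SimpleGraph β)
    (a : α) (b : β) :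
    numGraphCompositions ((G₁ ⊕g G₂) ⊔ SimpleGraph.fromEdgeSet {s(Sum.inl a, Sum.inr b)}) =
      2 * numGraphCompositions G₁ * numGraphCompositions G₂ := by
  rw [numGraphCompositions_eq_card_setoid, numGraphCompositions_eq_card_setoid,
    numGraphCompositions_eq_card_setoid]
  rw [Nat.card_congr (mainEquiv G₁ G₂ a b)]
  rw [Nat.card_prod, Nat.card_prod]
  simp [Nat.card_eq_fintype_card, mul_assoc]
end

section
/- Every tree T on n ≥ 1 vertices has exactly 2^(n-1) graph compositions. -/
open Finset SimpleGraph

namespace GraphCompAux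

variable {V : Type} [Fintype V] [DecidableEq V]

/-- Two finpartitions of `univ` agreeing on parts-of-elements are equal. -/
theorem finpartition_ext {P Q : Finpartition (Finset.univ : Finset V)}
    (h : ∀ a b : V, b ∈ P.part a ↔ b ∈ Q.part a) : P = Q := by
  have key : ∀ a : V, P.part a = Q.part a := fun a => by
    ext b; exact h a b
  ext t
  constructor
  · intro ht
    obtain ⟨a, ha⟩ := P.nonempty_of_mem_parts ht
    have : P.part a = t := P.part_eq_of_mem ht ha
    rw [← this, key]
    exact Q.part_mem.mpr (mem_univ a)
  · intro ht
    obtain ⟨a, ha⟩ := Q.nonempty_of_mem_parts ht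
    have : Q.part a = t := Q.part_eq_of_mem ht ha
    rw [← this, ← key]
    exact P.part_mem.mpr (mem_univ a)

variable (G : SimpleGraph V) [DecidableRel G.Adj]

/-- The set of edges of `G` lying inside a block of `P`. -/
def edgesOf (P : Finpartition (Finset.univ : Finset V)) : Finset (Sym2 V) :=
  G.edgeFinset.filter fun e => ∀ a b : V, e = s(a, b) → b ∈ P.part a

lemma mem_edgesOf {P : Finpartition (Finset.univ : Finset V)} {e : Sym2 V} :
    e ∈ edgesOf G P ↔ e ∈ G.edgeFinset ∧ ∀ a b : V, e = s(a, b) → b ∈ P.part a := by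
  simp [edgesOf]

lemma edgesOf_subset (P : Finpartition (Finset.univ : Finset V)) :
    edgesOf G P ⊆ G.edgeFinset := filter_subset _ _

/-- The finpartition of `univ` into connected components of `fromEdgeSet S`. -/
noncomputable def partnOf (S : Finset (Sym2 V)) : Finpartition (Finset.univ : Finset V) :=
  letI : DecidableRel (SimpleGraph.fromEdgeSet (↑S : Set (Sym2 V))).reachableSetoid.r :=
    Classical.decRel _
  Finpartition.ofSetoid (SimpleGraph.fromEdgeSet (↑S : Set (Sym2 V))).reachableSetoid

lemma mem_part_partnOf {S : Finset (Sym2 V)} {a b : V} :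
    b ∈ (partnOf S).part a ↔ (SimpleGraph.fromEdgeSet (↑S : Set (Sym2 V))).Reachable a b := by
  letI : DecidableRel (SimpleGraph.fromEdgeSet (↑S : Set (Sym2 V))).reachableSetoid.r :=
    Classical.decRel _
  exact Finpartition.mem_part_ofSetoid_iff_rel

/-- Lift a walk of a subgraph whose support lies in `s` to reachability in `G.induce s`. -/
lemma reachable_induce_of_walk {H : SimpleGraph V} (hle : H ≤ G) (s : Set V) :
    ∀ {a b : V} (p : H.Walk a b), (∀ v ∈ p.support, v ∈ s) → ∀ (ha : a ∈ s) (hb : b ∈ s),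
      (G.induce s).Reachable ⟨a, ha⟩ ⟨b, hb⟩ := by
  intro a b p
  induction p with
  | nil => intro _ _ _; rfl
  | @cons u v w h q ih =>
    intro hs ha hb
    have hv : v ∈ s := hs v (by simp)
    have h1 : (G.induce s).Adj ⟨u, ha⟩ ⟨v, hv⟩ := by
      simp only [comap_adj, Function.Embedding.coe_subtype]
      exact hle h
    exact h1.reachable.trans (ih (fun x hx => hs x (by simp [hx])) hv hb)

lemma fromEdgeSet_le {S : Finset (Sym2 V)} (hS : S ⊆ G.edgeFinset) :
    SimpleGraph.fromEdgeSet (↑S : Set (Sym2 V)) ≤ G := by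
  have : (↑S : Set (Sym2 V)) ⊆ G.edgeSet := by
    intro e he
    exact mem_edgeFinset.mp (hS he)
  calc SimpleGraph.fromEdgeSet (↑S : Set (Sym2 V)) ≤ SimpleGraph.fromEdgeSet G.edgeSet :=
        SimpleGraph.fromEdgeSet_mono this
    _ = G := G.fromEdgeSet_edgeSet

lemma reachable_of_induce_reachable {H : SimpleGraph V} (s : Set V)
    (hadj : ∀ x y : V, x ∈ s → y ∈ s → G.Adj x y → H.Adj x y) :
    ∀ {x y : s}, (G.induce s).Reachable x y → H.Reachable x.1 y.1 := by
  intro x y hr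
  obtain ⟨p⟩ := hr
  induction p with
  | nil => exact SimpleGraph.Reachable.refl _
  | @cons u v w h q ih =>
    have h' : H.Adj u.1 v.1 := hadj u v u.2 v.2 (by simpa using h)
    exact h'.reachable.trans ih

/-- Key lemma A: for a composition `P`, same-part is reachability in `fromEdgeSet (edgesOf G P)`. -/
lemma mem_part_iff_reachable {P : Finpartition (Finset.univ : Finset V)}
    (hP : ∀ s ∈ P.parts, (G.induce (s : Set V)).Connected) (a b : V) :
    b ∈ P.part a ↔ (SimpleGraph.fromEdgeSet (↑(edgesOf G P) : Set (Sym2 V))).Reachable a b := by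
  set H := SimpleGraph.fromEdgeSet (↑(edgesOf G P) : Set (Sym2 V)) with hH
  constructor
  · intro hb
    have ht : P.part a ∈ P.parts := P.part_mem.mpr (mem_univ a)
    have hconn := hP _ ht
    have ha : a ∈ P.part a := P.mem_part (mem_univ a)
    have hr : (G.induce ((P.part a : Finset V) : Set V)).Reachable ⟨a, ha⟩ ⟨b, hb⟩ :=
      hconn.preconnected _ _
    refine reachable_of_induce_reachable G _ ?_ hr
    intro x y hx hy hxy
    rw [hH, SimpleGraph.fromEdgeSet_adj]
    refine ⟨?_, hxy.ne⟩
    rw [Finset.mem_coe, mem_edgesOf]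
    refine ⟨by rwa [mem_edgeFinset, mem_edgeSet], ?_⟩
    intro c d hcd
    rw [Sym2.eq_iff] at hcd
    have hx' : x ∈ P.part a := hx
    have hy' : y ∈ P.part a := hy
    rcases hcd with ⟨rfl, rfl⟩ | ⟨rfl, rfl⟩
    · rw [P.part_eq_of_mem ht hx']; exact hy'
    · rw [P.part_eq_of_mem ht hy']; exact hx'
  · intro hr
    obtain ⟨p⟩ := hr
    induction p with
    | nil => exact P.mem_part (mem_univ _)
    | @cons u v w h q ih =>
      have hv : v ∈ P.part u := by
        rw [hH, SimpleGraph.fromEdgeSet_adj] at h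
        obtain ⟨he, -⟩ := h
        rw [Finset.mem_coe, mem_edgesOf] at he
        exact he.2 u v rfl
      have : P.part v = P.part u := P.part_eq_of_mem (P.part_mem.mpr (mem_univ u)) hv
      exact this ▸ ih
      
/-- Key lemma B: blocks of `partnOf S` induce connected subgraphs. -/
lemma partnOf_connected {S : Finset (Sym2 V)} (hS : S ⊆ G.edgeFinset) :
    ∀ t ∈ (partnOf S).parts, (G.induce ((t : Finset V) : Set V)).Connected := by
  intro t ht
  set H := SimpleGraph.fromEdgeSet (↑S : Set (Sym2 V)) with hH
  have hle : H ≤ G := fromEdgeSet_le G hS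
  obtain ⟨a, ha⟩ := (partnOf S).nonempty_of_mem_parts ht
  have hpart : (partnOf S).part a = t := (partnOf S).part_eq_of_mem ht ha
  rw [SimpleGraph.connected_iff]
  constructor
  · -- preconnected: reduce to reachability from a
    have key : ∀ (x : V) (hx : x ∈ (t : Set V)),
        (G.induce ((t : Finset V) : Set V)).Reachable ⟨a, ha⟩ ⟨x, hx⟩ := by
      intro x hx
      have hx' : x ∈ (partnOf S).part a := hpart ▸ (Finset.mem_coe.mp hx)
      have hr : H.Reachable a x := mem_part_partnOf.mp hx'
      obtain ⟨p⟩ := hr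
      refine reachable_induce_of_walk G hle (t : Set V) p ?_ _ hx
      intro v hv
      have : H.Reachable a v := ⟨p.takeUntil v hv⟩
      have : v ∈ (partnOf S).part a := mem_part_partnOf.mpr this
      exact Finset.mem_coe.mpr (hpart ▸ this)
    rintro ⟨x, hx⟩ ⟨y, hy⟩
    exact (key x hx).symm.trans (key y hy)
  · exact ⟨⟨a, ha⟩⟩

/-- Key lemma C: for a tree, `edgesOf` is a left inverse of `partnOf`. -/
lemma edgesOf_partnOf (hG : G.IsTree) {S : Finset (Sym2 V)} (hS : S ⊆ G.edgeFinset) :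
    edgesOf G (partnOf S) = S := by
  set H := SimpleGraph.fromEdgeSet (↑S : Set (Sym2 V)) with hH
  have hle : H ≤ G := fromEdgeSet_le G hS
  ext e
  induction e using Sym2.ind with
  | _ a b =>
    rw [mem_edgesOf]
    constructor
    · rintro ⟨he, hab⟩
      have hadj : G.Adj a b := mem_edgeFinset.mp he
      have hr : H.Reachable a b := mem_part_partnOf.mp (hab a b rfl)
      obtain ⟨w⟩ := hr
      -- transfer the path to G and use path uniqueness in the tree
      have hedges : ∀ e ∈ w.toPath.val.edges, e ∈ G.edgeSet := by
        intro e hee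
        exact (SimpleGraph.edgeSet_mono hle)
          (SimpleGraph.Walk.edges_subset_edgeSet _ hee)
      set q : G.Walk a b := (w.toPath.val).transfer G hedges with hq
      have hqpath : q.IsPath := w.toPath.prop.transfer hedges
      have huniq := hG.existsUnique_path a b
      have h1 : q = SimpleGraph.Walk.cons hadj SimpleGraph.Walk.nil :=
        huniq.unique hqpath (SimpleGraph.Path.singleton hadj).prop
      have hmem : s(a, b) ∈ q.edges := by
        rw [h1]; simp
      rw [hq, SimpleGraph.Walk.edges_transfer] at hmem
      have hmem2 : s(a, b) ∈ w.edges := SimpleGraph.Walk.edges_toPath_subset w hmem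
      have : s(a, b) ∈ H.edgeSet := SimpleGraph.Walk.edges_subset_edgeSet w hmem2
      rw [hH, SimpleGraph.edgeSet_fromEdgeSet, Set.mem_diff] at this
      exact this.1
    · intro heS
      have he : s(a, b) ∈ G.edgeFinset := hS heS
      have hadj : G.Adj a b := mem_edgeFinset.mp he
      refine ⟨he, ?_⟩
      intro c d hcd
      rw [mem_part_partnOf]
      have hH' : H.Adj c d := by
        rw [hH, SimpleGraph.fromEdgeSet_adj]
        refine ⟨hcd ▸ heS, ?_⟩
        have : G.Adj c d := by
          rw [Sym2.eq_iff] at hcd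
          rcases hcd with ⟨rfl, rfl⟩ | ⟨rfl, rfl⟩
          · exact hadj
          · exact hadj.symm
        exact this.ne
      exact hH'.reachable

/-- Key lemma D: `partnOf` is a left inverse of `edgesOf` on compositions. -/
lemma partnOf_edgesOf {P : Finpartition (Finset.univ : Finset V)}
    (hP : ∀ s ∈ P.parts, (G.induce (s : Set V)).Connected) :
    partnOf (edgesOf G P) = P := by
  apply finpartition_ext
  intro a b
  rw [mem_part_partnOf, mem_part_iff_reachable G hP]

end GraphCompAux

/-- Every tree on `n ≥ 1` vertices has exactly `2^(n-1)` graph compositions. -/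
theorem numGraphCompositions_tree {V : Type} [Fintype V] [DecidableEq V]
    (G : SimpleGraph V) (hG : G.IsTree) (hn : 1 ≤ Fintype.card V) :
    numGraphCompositions G = 2 ^ (Fintype.card V - 1) := by
  letI : DecidableRel G.Adj := Classical.decRel _
  open GraphCompAux in
  have e : {P : Finpartition (Finset.univ : Finset V) //
      ∀ s ∈ P.parts, (G.induce (s : Set V)).Connected} ≃
      {S : Finset (Sym2 V) // S ⊆ G.edgeFinset} :=
    { toFun := fun P => ⟨edgesOf G P.1, edgesOf_subset G P.1⟩
      invFun := fun S => ⟨partnOf S.1, partnOf_connected G S.2⟩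
      left_inv := fun P => Subtype.ext (partnOf_edgesOf G P.2)
      right_inv := fun S => Subtype.ext (edgesOf_partnOf G hG S.2) }
  have e2 : {S : Finset (Sym2 V) // S ⊆ G.edgeFinset} ≃ ↥G.edgeFinset.powerset :=
    Equiv.subtypeEquivRight fun S => (Finset.mem_powerset).symm
  rw [numGraphCompositions, Nat.card_congr (e.trans e2), Nat.card_eq_finsetCard,
    Finset.card_powerset]
  have hcard := hG.card_edgeFinset
  congr 1
  omega
end

section
/- Let K_n^- be the complete graph on n vertices with one edge removed, n > 1. Then the number of graph compositions C(K_n^-) = B_n - B_{n-2}, where B_m is the m-th Bell number. -/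
open Finset

section Transfer

variable {α β : Type} [DecidableEq α] [DecidableEq β] {s : Finset α} {t : Finset β}

/-- Transfer a finset along a bijection of ambient finsets. -/
def pmapFinset (e : {x // x ∈ s} ≃ {y // y ∈ t}) (p : Finset α) : Finset β :=
  (s.attach.filter (fun x => ↑x ∈ p)).image (fun x => (e x : β))

lemma mem_pmapFinset (e : {x // x ∈ s} ≃ {y // y ∈ t}) {p : Finset α} {y : β} :
    y ∈ pmapFinset e p ↔ ∃ x : {x // x ∈ s}, ↑x ∈ p ∧ ↑(e x) = y := by
  simp [pmapFinset]

lemma pmapFinset_pmapFinset (e : {x // x ∈ s} ≃ {y // y ∈ t}) {p : Finset α} (hp : p ⊆ s) :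
    pmapFinset e.symm (pmapFinset e p) = p := by
  ext z
  simp only [mem_pmapFinset]
  constructor
  · rintro ⟨x2, ⟨x1, hx1, hex⟩, hz⟩
    have : x2 = e x1 := Subtype.ext hex.symm
    subst this
    rw [Equiv.symm_apply_apply] at hz
    rwa [← hz]
  · intro hz
    refine ⟨e ⟨z, hp hz⟩, ⟨⟨z, hp hz⟩, hz, rfl⟩, by simp⟩

/-- Transfer a finpartition along a bijection of ambient finsets. -/
def Finpartition.transfer (e : {x // x ∈ s} ≃ {y // y ∈ t}) (P : Finpartition s) :
    Finpartition t where
  parts := P.parts.image (pmapFinset e)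
  supIndep := by
    rw [Finset.supIndep_iff_pairwiseDisjoint]
    rintro u hu v hv huv
    rw [Finset.mem_coe, Finset.mem_image] at hu hv
    obtain ⟨p, hp, rfl⟩ := hu
    obtain ⟨q, hq, rfl⟩ := hv
    have hpq : p ≠ q := fun h => huv (by rw [h])
    show Disjoint (pmapFinset e p) (pmapFinset e q)
    rw [Finset.disjoint_left]
    intro y hy1 hy2
    rw [mem_pmapFinset] at hy1 hy2
    obtain ⟨x1, hx1, he1⟩ := hy1
    obtain ⟨x2, hx2, he2⟩ := hy2
    have : x1 = x2 := e.injective (Subtype.ext (he1.trans he2.symm))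
    subst this
    exact (Finset.disjoint_left.1 (P.disjoint hp hq hpq)) hx1 hx2
  sup_parts := by
    ext y
    rw [Finset.mem_sup]
    constructor
    · rintro ⟨u, hu, hy⟩
      rw [Finset.mem_image] at hu
      obtain ⟨p, hp, rfl⟩ := hu
      rw [id_eq, mem_pmapFinset] at hy
      obtain ⟨x, _, rfl⟩ := hy
      exact (e x).2
    · intro hy
      have hx : (↑(e.symm ⟨y, hy⟩) : α) ∈ P.parts.sup id := by
        rw [P.sup_parts]; exact (e.symm ⟨y, hy⟩).2
      rw [Finset.mem_sup] at hx
      obtain ⟨p, hp, hxp⟩ := hx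
      refine ⟨pmapFinset e p, Finset.mem_image_of_mem _ hp, ?_⟩
      show y ∈ pmapFinset e p
      rw [mem_pmapFinset]
      exact ⟨e.symm ⟨y, hy⟩, hxp, by simp⟩
  bot_notMem := by
    intro h
    rw [Finset.mem_image] at h
    obtain ⟨p, hp, hbot⟩ := h
    obtain ⟨x, hx⟩ := P.nonempty_of_mem_parts hp
    have : ↑(e ⟨x, P.le hp hx⟩) ∈ pmapFinset e p :=
      (mem_pmapFinset e).2 ⟨⟨x, P.le hp hx⟩, hx, rfl⟩
    rw [hbot] at this
    exact absurd this (Finset.notMem_empty _)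

lemma Finpartition.transfer_transfer (e : {x // x ∈ s} ≃ {y // y ∈ t}) (P : Finpartition s) :
    (P.transfer e).transfer e.symm = P := by
  apply Finpartition.ext
  show ((P.parts.image (pmapFinset e)).image (pmapFinset e.symm)) = P.parts
  rw [Finset.image_image]
  rw [show (pmapFinset e.symm ∘ pmapFinset e) = fun p => pmapFinset e.symm (pmapFinset e p) from rfl]
  calc P.parts.image (fun p => pmapFinset e.symm (pmapFinset e p))
      = P.parts.image id := Finset.image_congr (fun p hp => pmapFinset_pmapFinset e (P.le hp))
    _ = P.parts := Finset.image_id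

/-- Finpartitions transfer along bijections of ambient finsets. -/
def Finpartition.transferEquiv (e : {x // x ∈ s} ≃ {y // y ∈ t}) :
    Finpartition s ≃ Finpartition t where
  toFun := Finpartition.transfer e
  invFun := Finpartition.transfer e.symm
  left_inv := Finpartition.transfer_transfer e
  right_inv := fun Q => by
    have := Finpartition.transfer_transfer e.symm Q
    rwa [Equiv.symm_symm] at this

lemma card_finpartition_eq_of_card_eq (h : s.card = t.card) :
    Nat.card (Finpartition s) = Nat.card (Finpartition t) := by
  have e : {x // x ∈ s} ≃ {y // y ∈ t} :=
    Fintype.equivOfCardEq (by simpa [Fintype.card_coe] using h)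
  exact Nat.card_congr (Finpartition.transferEquiv e)

lemma card_finpartition_eq_bell {s : Finset α} : Nat.card (Finpartition s) = bell s.card := by
  rw [bell]
  exact card_finpartition_eq_of_card_eq (by simp)

end Transfer

section Bad

variable {α : Type} [Fintype α] [DecidableEq α]

/-- Partitions containing a fixed part `u` are equivalent to partitions of the complement. -/
def badEquiv (u : Finset α) (hu : u.Nonempty) :
    {P : Finpartition (Finset.univ : Finset α) // u ∈ P.parts} ≃
      Finpartition ((Finset.univ : Finset α) \ u) where
  toFun P := P.1.avoid u
  invFun Q := ⟨Q.extend (by simpa [Finset.bot_eq_empty] using hu.ne_empty)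
      Finset.sdiff_disjoint (by rw [Finset.sup_eq_union,
        Finset.sdiff_union_of_subset (Finset.subset_univ u)]),
    by simp [Finpartition.extend]⟩
  left_inv := by
    rintro ⟨P, hP⟩
    apply Subtype.ext
    apply Finpartition.ext
    show insert u ((P.avoid u).parts) = P.parts
    ext p
    simp only [Finset.mem_insert, Finpartition.mem_avoid]
    constructor
    · rintro (rfl | ⟨d, hd, hdu, rfl⟩)
      · exact hP
      · have hddu : d ≠ u := fun h => hdu (le_of_eq h)
        have : Disjoint d u := P.disjoint hd hP hddu
        rwa [Finset.sdiff_eq_self_of_disjoint this]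
    · intro hp
      rcases eq_or_ne p u with rfl | hne
      · exact Or.inl rfl
      · refine Or.inr ⟨p, hp, ?_, ?_⟩
        · intro hle
          have hdisj : Disjoint p u := P.disjoint hp hP hne
          obtain ⟨x, hx⟩ := P.nonempty_of_mem_parts hp
          exact (Finset.disjoint_left.1 hdisj) hx (hle hx)
        · exact Finset.sdiff_eq_self_of_disjoint (P.disjoint hp hP hne)
  right_inv := by
    intro Q
    apply Finpartition.ext
    ext p
    rw [Finpartition.mem_avoid]
    constructor
    · rintro ⟨d, hd, hdu, rfl⟩
      rw [show (Q.extend _ _ _).parts = insert u Q.parts from rfl, Finset.mem_insert] at hd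
      rcases hd with rfl | hd
      · exact absurd le_rfl hdu
      · have : Disjoint d u := Finset.disjoint_of_subset_left (Q.le hd) Finset.sdiff_disjoint
        rwa [Finset.sdiff_eq_self_of_disjoint this]
    · intro hp
      refine ⟨p, ?_, ?_, ?_⟩
      · show p ∈ insert u Q.parts
        exact Finset.mem_insert_of_mem hp
      · intro hle
        have hdisj : Disjoint p u :=
          Finset.disjoint_of_subset_left (Q.le hp) Finset.sdiff_disjoint
        obtain ⟨x, hx⟩ := Q.nonempty_of_mem_parts hp
        exact (Finset.disjoint_left.1 hdisj) hx (hle hx)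
      · exact Finset.sdiff_eq_self_of_disjoint
          (Finset.disjoint_of_subset_left (Q.le hp) Finset.sdiff_disjoint)

end Bad

section Conn

lemma adj_kn_minus {n : ℕ} (a b : Fin n) {x y : Fin n} :
    ((⊤ : SimpleGraph (Fin n)) \ SimpleGraph.fromEdgeSet {s(a, b)}).Adj x y ↔
      x ≠ y ∧ s(x, y) ≠ s(a, b) := by
  simp only [SimpleGraph.sdiff_adj, SimpleGraph.top_adj, SimpleGraph.fromEdgeSet_adj,
    Set.mem_singleton_iff]
  tauto

lemma conn_iff {n : ℕ} (a b : Fin n) (hab : a ≠ b) (p : Finset (Fin n)) (hp : p.Nonempty) :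
    (((⊤ : SimpleGraph (Fin n)) \ SimpleGraph.fromEdgeSet {s(a, b)}).induce
        (p : Set (Fin n))).Connected ↔ p ≠ ({a, b} : Finset (Fin n)) := by
  set G := (⊤ : SimpleGraph (Fin n)) \ SimpleGraph.fromEdgeSet {s(a, b)} with hG
  constructor
  · rintro h rfl
    have hbot : G.induce (({a, b} : Finset (Fin n)) : Set (Fin n)) = ⊥ := by
      ext u v
      simp only [SimpleGraph.comap_adj, Function.Embedding.coe_subtype, SimpleGraph.bot_adj,
        iff_false]
      intro hadj
      rw [adj_kn_minus a b] at hadj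
      have hu := u.2
      have hv := v.2
      simp only [Finset.coe_insert, Set.mem_insert_iff, Finset.coe_singleton,
        Set.mem_singleton_iff] at hu hv
      apply hadj.2
      rcases hu with hu | hu <;> rcases hv with hv | hv
      · exact absurd (hu.trans hv.symm) hadj.1
      · rw [hu, hv]
      · rw [hu, hv]; exact Sym2.eq_swap
      · exact absurd (hu.trans hv.symm) hadj.1
    have ha : (a : Fin n) ∈ (({a, b} : Finset (Fin n)) : Set (Fin n)) := by simp
    have hb : (b : Fin n) ∈ (({a, b} : Finset (Fin n)) : Set (Fin n)) := by simp
    have hr := h.preconnected ⟨a, ha⟩ ⟨b, hb⟩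
    rw [hbot, SimpleGraph.reachable_bot] at hr
    exact hab (congrArg Subtype.val hr)
  · intro hne
    rw [SimpleGraph.connected_iff]
    have key : ∀ x y (hx : x ∈ p) (hy : y ∈ p),
        (G.induce (p : Set (Fin n))).Reachable ⟨x, by simpa using hx⟩ ⟨y, by simpa using hy⟩ := by
      intro x y hx hy
      rcases eq_or_ne x y with rfl | hxy
      · rfl
      rcases eq_or_ne s(x, y) s(a, b) with hs | hs
      · -- x, y are a, b in some order; go through a third vertex
        have hmem : ({a, b} : Finset (Fin n)) ⊆ p := by
          rw [Sym2.eq_iff] at hs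
          rcases hs with ⟨rfl, rfl⟩ | ⟨rfl, rfl⟩ <;>
            · intro z hz
              simp only [Finset.mem_insert, Finset.mem_singleton] at hz
              rcases hz with rfl | rfl <;> assumption
        have hss : ({a, b} : Finset (Fin n)) ⊂ p := hmem.ssubset_of_ne (Ne.symm hne)
        obtain ⟨c, hcp, hcab⟩ := Finset.exists_of_ssubset hss
        simp only [Finset.mem_insert, Finset.mem_singleton, not_or] at hcab
        obtain ⟨hca, hcb⟩ := hcab
        have hxab : x = a ∨ x = b := by
          rw [Sym2.eq_iff] at hs
          rcases hs with ⟨h1, _⟩ | ⟨h1, _⟩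
          · exact Or.inl h1
          · exact Or.inr h1
        have hyab : y = a ∨ y = b := by
          rw [Sym2.eq_iff] at hs
          rcases hs with ⟨_, h1⟩ | ⟨_, h1⟩
          · exact Or.inr h1
          · exact Or.inl h1
        have hadj1 : (G.induce (p : Set (Fin n))).Adj ⟨x, by simpa using hx⟩ ⟨c, by simpa using hcp⟩ := by
          simp only [SimpleGraph.comap_adj, Function.Embedding.coe_subtype]
          rw [adj_kn_minus a b]
          constructor
          · rintro rfl
            rcases hxab with rfl | rfl
            · exact hca rfl
            · exact hcb rfl
          · intro hsc
            rw [Sym2.eq_iff] at hsc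
            rcases hsc with ⟨_, h2⟩ | ⟨_, h2⟩
            · exact hcb h2
            · exact hca h2
        have hadj2 : (G.induce (p : Set (Fin n))).Adj ⟨c, by simpa using hcp⟩ ⟨y, by simpa using hy⟩ := by
          simp only [SimpleGraph.comap_adj, Function.Embedding.coe_subtype]
          rw [adj_kn_minus a b]
          constructor
          · rintro rfl
            rcases hyab with rfl | rfl
            · exact hca rfl
            · exact hcb rfl
          · intro hsc
            rw [Sym2.eq_iff] at hsc
            rcases hsc with ⟨h2, _⟩ | ⟨h2, _⟩
            · exact hca h2
            · exact hcb h2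
        exact hadj1.reachable.trans hadj2.reachable
      · refine SimpleGraph.Adj.reachable ?_
        simp only [SimpleGraph.comap_adj, Function.Embedding.coe_subtype]
        rw [adj_kn_minus a b]
        exact ⟨hxy, hs⟩
    refine ⟨?_, ?_⟩
    · rintro ⟨x, hx⟩ ⟨y, hy⟩
      exact key x y (by simpa using hx) (by simpa using hy)
    · obtain ⟨x, hx⟩ := hp
      exact ⟨⟨x, by simpa using hx⟩⟩

end Conn

/-- The complete graph on `n > 1` vertices with one edge removed has
`B_n - B_{n-2}` graph compositions. -/
theorem numGraphCompositions_completeGraph_minus_edge (n : ℕ) (hn : 1 < n)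
    (a b : Fin n) (hab : a ≠ b) :
    numGraphCompositions ((⊤ : SimpleGraph (Fin n)) \ SimpleGraph.fromEdgeSet {s(a, b)}) =
      bell n - bell (n - 2) := by
  classical
  set G := (⊤ : SimpleGraph (Fin n)) \ SimpleGraph.fromEdgeSet {s(a, b)} with hG
  have hcond : ∀ P : Finpartition (Finset.univ : Finset (Fin n)),
      (∀ s ∈ P.parts, (G.induce (s : Set (Fin n))).Connected) ↔
        ¬ (({a, b} : Finset (Fin n)) ∈ P.parts) := by
    intro P
    constructor
    · intro h hmem
      have := (conn_iff a b hab _ (P.nonempty_of_mem_parts hmem)).1 (h _ hmem)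
      exact this rfl
    · intro h s hs
      exact (conn_iff a b hab s (P.nonempty_of_mem_parts hs)).2 (fun he => h (he ▸ hs))
  rw [numGraphCompositions, Nat.card_congr (Equiv.subtypeEquivRight hcond)]
  have hbad : Nat.card {P : Finpartition (Finset.univ : Finset (Fin n)) //
      ({a, b} : Finset (Fin n)) ∈ P.parts} = bell (n - 2) := by
    rw [Nat.card_congr (badEquiv ({a, b} : Finset (Fin n)) (Finset.insert_nonempty _ _))]
    rw [card_finpartition_eq_bell]
    congr 1
    rw [Finset.card_sdiff_of_subset (Finset.subset_univ _), Finset.card_univ, Fintype.card_fin,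
      Finset.card_insert_of_notMem (by simpa using hab), Finset.card_singleton]
  have htot : Nat.card (Finpartition (Finset.univ : Finset (Fin n))) = bell n := by
    rw [bell]
  rw [← htot, ← hbad]
  simp only [Nat.card_eq_fintype_card]
  rw [Fintype.card_subtype_compl]
end

section
/- The cycle graph C_n on n ≥ 1 vertices has exactly 2^n - n graph compositions. -/
open Finset SimpleGraph
open Fin.CommRing

namespace CycComp
variable {n : ℕ} [NeZero n]

lemma val_add_nat (a : Fin n) (j : ℕ) : (a + (j : Fin n)).val = (a.val + j) % n := by
  rw [Fin.add_def, Fin.val_natCast]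
  simp [Nat.add_mod]

lemma val_sub_nat {a : Fin n} {j : ℕ} (h : j ≤ a.val) : (a - (j : Fin n)).val = a.val - j := by
  have hn : 0 < n := Nat.pos_of_ne_zero (NeZero.ne n)
  have ha := a.isLt
  rw [Fin.sub_def, Fin.val_natCast]
  simp only
  have hj : j % n = j := Nat.mod_eq_of_lt (by omega)
  rw [hj]
  have : n - j + a.val = (a.val - j) + n := by omega
  rw [this, Nat.add_mod_right, Nat.mod_eq_of_lt (by omega)]

lemma val_sub_eq_zero_iff {a b : Fin n} : (a - b).val = 0 ↔ a = b := by
  constructor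
  · intro h
    have : a - b = 0 := Fin.ext (by simpa using h)
    exact sub_eq_zero.mp this
  · rintro rfl; simp

lemma add_natCast_val_sub (v u : Fin n) : v + (((u - v).val : ℕ) : Fin n) = u := by
  rw [Fin.cast_val_eq_self, add_sub_cancel]

lemma natCast_mod (j : ℕ) : ((j % n : ℕ) : Fin n) = (j : Fin n) := by
  apply Fin.ext
  simp [Fin.val_natCast, Nat.mod_mod_of_dvd]

/-- The arc of `k` consecutive vertices starting at `v`. -/
def arc (v : Fin n) (k : ℕ) : Finset (Fin n) :=
  (Finset.range k).image (fun i : ℕ => v + (i : Fin n))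

lemma mem_arc {v u : Fin n} {k : ℕ} (hk : k ≤ n) : u ∈ arc v k ↔ (u - v).val < k := by
  constructor
  · rintro hu
    obtain ⟨i, hi, rfl⟩ := Finset.mem_image.mp hu
    rw [Finset.mem_range] at hi
    have : (v + (i : Fin n) - v).val = i := by
      rw [add_sub_cancel_left, Fin.val_natCast, Nat.mod_eq_of_lt (by omega)]
    omega
  · intro hu
    exact Finset.mem_image.mpr ⟨(u - v).val, Finset.mem_range.mpr hu, add_natCast_val_sub v u⟩

lemma card_arc (v : Fin n) {k : ℕ} (hk : k ≤ n) : (arc v k).card = k := by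
  rw [arc, Finset.card_image_of_injOn, Finset.card_range]
  intro i hi j hj hij
  rw [Finset.mem_coe, Finset.mem_range] at hi hj
  have : ((i:ℕ) : Fin n).val = ((j:ℕ) : Fin n).val := by rw [add_right_injective _ hij]
  rwa [Fin.val_natCast, Fin.val_natCast, Nat.mod_eq_of_lt (by omega),
    Nat.mod_eq_of_lt (by omega)] at this

lemma arc_univ (v : Fin n) : arc v n = Finset.univ := by
  apply Finset.eq_univ_of_card
  rw [card_arc v le_rfl, Fintype.card_fin]

lemma adj_consec {u : Fin n} (h2 : 1 < n) : (cycleGraph n).Adj u (u + 1) := by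
  rw [cycleGraph_adj']
  right
  rw [add_sub_cancel_left]
  exact Nat.one_mod_eq_one.mpr (by omega)

lemma adj_cases {u w : Fin n} (h : (cycleGraph n).Adj u w) : w = u + 1 ∨ w = u - 1 := by
  rw [cycleGraph_adj'] at h
  rcases h with h | h
  · right
    have h2 : 1 < n := by have := (u - w).isLt; omega
    have : u - w = 1 := Fin.ext (by rw [h]; exact (Nat.one_mod_eq_one.mpr (by omega)).symm)
    rw [← this]; ring
  · left
    have h2 : 1 < n := by have := (w - u).isLt; omega
    have : w - u = 1 := Fin.ext (by rw [h]; exact (Nat.one_mod_eq_one.mpr (by omega)).symm)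
    rw [← this]; ring

lemma arc_connected (v : Fin n) {k : ℕ} (hk1 : 1 ≤ k) (hkn : k ≤ n) :
    ((cycleGraph n).induce (arc v k : Set (Fin n))).Connected := by
  have hmem : ∀ i : ℕ, i < k → v + (i : Fin n) ∈ arc v k := by
    intro i hi
    rw [mem_arc hkn, add_sub_cancel_left, Fin.val_natCast, Nat.mod_eq_of_lt (by omega)]
    exact hi
  have hv : v ∈ arc v k := by simpa using hmem 0 (by omega)
  rw [connected_iff]
  refine ⟨?_, ⟨⟨v, hv⟩⟩⟩
  have key : ∀ i : ℕ, ∀ hi : i < k,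
      ((cycleGraph n).induce (arc v k : Set (Fin n))).Reachable ⟨v, hv⟩ ⟨v + (i : Fin n), hmem i hi⟩ := by
    intro i
    induction i with
    | zero =>
      intro hi
      have he : (⟨v, hv⟩ : (arc v k : Set (Fin n))) = ⟨v + ((0 : ℕ) : Fin n), hmem _ hi⟩ :=
        Subtype.ext (by simp)
      rw [← he]
    | succ i ih =>
      intro hi
      rcases Nat.lt_or_ge n 2 with h2 | h2
      · have hs : Subsingleton (Fin n) := by
          have : n = 1 := by have := Nat.pos_of_ne_zero (NeZero.ne n); omega
          subst this; infer_instance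
        have he : (⟨v, hv⟩ : (arc v k : Set (Fin n))) = ⟨v + ((i+1 : ℕ) : Fin n), hmem _ hi⟩ := by
          exact Subtype.ext (Subsingleton.elim _ _)
        rw [he]
      · refine (ih (by omega)).trans (SimpleGraph.Adj.reachable ?_)
        show (cycleGraph n).Adj (v + (i : Fin n)) (v + ((i+1 : ℕ) : Fin n))
        have : ((i+1 : ℕ) : Fin n) = (i : Fin n) + 1 := by push_cast; ring
        rw [this, ← add_assoc]
        exact adj_consec h2
  rintro ⟨a, ha⟩ ⟨b, hb⟩
  have hha := (mem_arc hkn).mp ha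
  have hhb := (mem_arc hkn).mp hb
  have ea : v + (((a - v).val : ℕ) : Fin n) = a := add_natCast_val_sub v a
  have eb : v + (((b - v).val : ℕ) : Fin n) = b := add_natCast_val_sub v b
  have ra := key (a - v).val hha
  have rb := key (b - v).val hhb
  have ha' : (⟨v + (((a - v).val : ℕ) : Fin n), hmem _ hha⟩ : (arc v k : Set (Fin n))) = ⟨a, ha⟩ :=
    Subtype.ext ea
  have hb' : (⟨v + (((b - v).val : ℕ) : Fin n), hmem _ hhb⟩ : (arc v k : Set (Fin n))) = ⟨b, hb⟩ :=
    Subtype.ext eb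
  rw [ha'] at ra
  rw [hb'] at rb
  exact ra.symm.trans rb

lemma step_lemma {s : Finset (Fin n)} {v u x : Fin n} (hv1 : v - 1 ∉ s) (hx : x ∈ s)
    (hadj : (cycleGraph n).Adj u x)
    (hu : ∀ j : ℕ, j ≤ (u - v).val → v + (j : Fin n) ∈ s) :
    ∀ j : ℕ, j ≤ (x - v).val → v + (j : Fin n) ∈ s := by
  rcases adj_cases hadj with rfl | rfl
  · -- x = u + 1
    set a := (u - v).val with ha
    by_cases hn' : a + 1 < n
    · have hval : (u + 1 - v).val = a + 1 := by
        have h1 : u + 1 - v = (u - v) + ((1:ℕ) : Fin n) := by push_cast; ring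
        rw [h1, val_add_nat, Nat.mod_eq_of_lt hn']
      rw [hval]
      intro j hj
      rcases Nat.lt_or_ge j (a+1) with h | h
      · exact hu j (by omega)
      · have : j = a + 1 := by omega
        subst this
        have : v + ((a + 1 : ℕ) : Fin n) = u + 1 := by
          push_cast
          rw [← add_assoc]
          rw [ha, add_natCast_val_sub]
        rw [this]; exact hx
    · intro j hj
      have := (u + 1 - v).isLt
      exact hu j (by omega)
  · -- x = u - 1
    set a := (u - v).val with ha
    by_cases h0 : a = 0
    · exfalso
      have h0' : (u - v).val = 0 := by rw [← ha]; exact h0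
      have : u = v := val_sub_eq_zero_iff.mp h0'
      exact hv1 (this ▸ hx)
    · have hval : (u - 1 - v).val = a - 1 := by
        have h1 : u - 1 - v = (u - v) - ((1:ℕ) : Fin n) := by push_cast; ring
        rw [h1, val_sub_nat (by omega)]
      rw [hval]
      intro j hj
      exact hu j (by omega)

lemma start_covers {s : Finset (Fin n)}
    (hc : ((cycleGraph n).induce (s : Set (Fin n))).Connected)
    {v w : Fin n} (hv : v ∈ s) (hv1 : v - 1 ∉ s) (hw : w ∈ s) :
    ∀ j : ℕ, j ≤ (w - v).val → v + (j : Fin n) ∈ s := by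
  have aux : ∀ (u w' : (s : Set (Fin n)))
      (_ : ((cycleGraph n).induce (s : Set (Fin n))).Walk u w'),
      (∀ j : ℕ, j ≤ ((u : Fin n) - v).val → v + (j : Fin n) ∈ s) →
      (∀ j : ℕ, j ≤ ((w' : Fin n) - v).val → v + (j : Fin n) ∈ s) := by
    intro u w' p
    induction p with
    | nil => exact id
    | @cons u' x' w'' h q ih =>
      intro hu
      exact ih (step_lemma hv1 x'.2 h hu)
  obtain ⟨p⟩ := hc.preconnected ⟨v, hv⟩ ⟨w, hw⟩
  refine aux _ _ p ?_
  intro j hj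
  simp only [sub_self, Fin.val_zero, Nat.le_zero] at hj
  subst hj
  simpa using hv

lemma start_unique {s : Finset (Fin n)}
    (hc : ((cycleGraph n).induce (s : Set (Fin n))).Connected)
    {v w : Fin n} (hv : v ∈ s) (hv1 : v - 1 ∉ s) (hw : w ∈ s) (hw1 : w - 1 ∉ s) : v = w := by
  by_contra hne
  have ha : 1 ≤ (w - v).val := by
    rcases Nat.eq_zero_or_pos (w - v).val with h | h
    · exact absurd (val_sub_eq_zero_iff.mp h) (fun e => hne e.symm)
    · omega
  have hmem := start_covers hc hv hv1 hw ((w - v).val - 1) (by omega)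
  have he : v + (((w - v).val - 1 : ℕ) : Fin n) = w - 1 := by
    have h1 : (((w - v).val - 1 : ℕ) : Fin n) = (w - v) - ((1:ℕ) : Fin n) := by
      apply Fin.ext
      rw [Fin.val_natCast, Nat.mod_eq_of_lt (by have := (w-v).isLt; omega),
        val_sub_nat (by omega)]
    rw [h1]; push_cast; ring
  rw [he] at hmem
  exact hw1 hmem

lemma closed_pred_eq_univ {s : Finset (Fin n)} (hne : s.Nonempty)
    (h : ∀ v ∈ s, v - 1 ∈ s) : s = Finset.univ := by
  obtain ⟨v, hv⟩ := hne
  have key : ∀ k : ℕ, v - (k : Fin n) ∈ s := by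
    intro k
    induction k with
    | zero => simpa using hv
    | succ k ih =>
      have : v - ((k+1 : ℕ) : Fin n) = (v - (k : Fin n)) - 1 := by push_cast; ring
      rw [this]
      exact h _ ih
  apply Finset.eq_univ_of_forall
  intro w
  have := key (v - w).val
  rwa [Fin.cast_val_eq_self, sub_sub_cancel] at this

lemma connected_eq_arc {s : Finset (Fin n)}
    (hc : ((cycleGraph n).induce (s : Set (Fin n))).Connected)
    {v : Fin n} (hv : v ∈ s) (hv1 : v - 1 ∉ s) : s = arc v s.card := by
  have hne : (s.image fun u => (u - v).val).Nonempty := ⟨0, by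
    simp only [Finset.mem_image]; exact ⟨v, hv, by simp⟩⟩
  set m := (s.image fun u => (u - v).val).max' hne with hm
  obtain ⟨u, hu, hum⟩ := Finset.mem_image.mp ((s.image fun u => (u - v).val).max'_mem hne)
  have hmlt : m < n := by rw [← hm] at hum; rw [← hum]; exact (u - v).isLt
  have harc : s = arc v (m + 1) := by
    apply Finset.Subset.antisymm
    · intro x hx
      rw [mem_arc (by omega)]
      have : (x - v).val ≤ m := by
        rw [hm]; exact Finset.le_max' (s.image fun u => (u - v).val) _ (Finset.mem_image.mpr ⟨x, hx, rfl⟩)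
      omega
    · intro x hx
      rw [mem_arc (by omega)] at hx
      have hj : (x - v).val ≤ (u - v).val := by rw [hum, ← hm]; omega
      have := start_covers hc hv hv1 hu (x - v).val hj
      rwa [Fin.cast_val_eq_self, add_sub_cancel] at this
  have hcard : s.card = m + 1 := by rw [harc, card_arc v (by omega)]
  rw [hcard]; exact harc

open Classical in
/-- The first element of `S` encountered going backwards from `u`. -/
noncomputable def strt (S : Finset (Fin n)) (u : Fin n) : Fin n :=
  if h : ∃ k : ℕ, u - (k : Fin n) ∈ S then u - ((Nat.find h : ℕ) : Fin n) else 0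

open Classical in
lemma strt_exists_iff {S : Finset (Fin n)} {u : Fin n} :
    (∃ k : ℕ, u - (k : Fin n) ∈ S) ↔ S.Nonempty := by
  constructor
  · rintro ⟨k, hk⟩; exact ⟨_, hk⟩
  · rintro ⟨s, hs⟩
    exact ⟨(u - s).val, by rwa [Fin.cast_val_eq_self, sub_sub_cancel]⟩

open Classical in
lemma strt_eq_iff {S : Finset (Fin n)} (hS : S.Nonempty) {u c : Fin n} :
    strt S u = c ↔ (c ∈ S ∧ ∀ j : ℕ, j < (u - c).val → u - (j : Fin n) ∉ S) := by
  have h : ∃ k : ℕ, u - (k : Fin n) ∈ S := strt_exists_iff.mpr hS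
  rw [strt, dif_pos h]
  have hm : u - ((Nat.find h : ℕ) : Fin n) ∈ S := Nat.find_spec h
  have hmin : ∀ j < Nat.find h, u - (j : Fin n) ∉ S := fun j hj => Nat.find_min h hj
  have hmlt : Nat.find h < n := by
    by_contra hge
    push_neg at hge
    have hcast : ((Nat.find h - n : ℕ) : Fin n) = ((Nat.find h : ℕ) : Fin n) := by
      apply Fin.ext
      rw [Fin.val_natCast, Fin.val_natCast, Nat.mod_eq_sub_mod hge]
    have : u - ((Nat.find h - n : ℕ) : Fin n) ∈ S := by rw [hcast]; exact hm
    have hle := Nat.find_min' h this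
    have := Nat.pos_of_ne_zero (NeZero.ne n)
    omega
  have hval : (u - (u - ((Nat.find h : ℕ) : Fin n))).val = Nat.find h := by
    rw [sub_sub_cancel, Fin.val_natCast, Nat.mod_eq_of_lt hmlt]
  constructor
  · rintro rfl
    refine ⟨hm, ?_⟩
    rw [hval]
    exact hmin
  · rintro ⟨hc, hmin'⟩
    have hd : u - (((u - c).val : ℕ) : Fin n) = c := by
      rw [Fin.cast_val_eq_self, sub_sub_cancel]
    have hle : Nat.find h ≤ (u - c).val := Nat.find_min' h (by rw [hd]; exact hc)
    have hnlt : ¬ Nat.find h < (u - c).val := fun hlt => hmin' _ hlt hm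
    have : Nat.find h = (u - c).val := by omega
    rw [this, hd]

lemma strt_mem {S : Finset (Fin n)} (hS : S.Nonempty) (u : Fin n) : strt S u ∈ S :=
  ((strt_eq_iff hS).mp rfl).1

lemma strt_min {S : Finset (Fin n)} (hS : S.Nonempty) (u : Fin n) :
    ∀ j : ℕ, j < (u - strt S u).val → u - (j : Fin n) ∉ S :=
  ((strt_eq_iff hS).mp rfl).2

lemma strt_self {S : Finset (Fin n)} (hS : S.Nonempty) {c : Fin n} (hc : c ∈ S) :
    strt S c = c := by
  rw [strt_eq_iff hS]
  exact ⟨hc, by simp⟩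

lemma strt_of_empty {S : Finset (Fin n)} (hS : ¬ S.Nonempty) (u : Fin n) : strt S u = 0 := by
  rw [strt, dif_neg (fun h => hS (strt_exists_iff.mp h))]

/-- The setoid whose classes are the arcs between consecutive cut points. -/
def cutSetoid (S : Finset (Fin n)) : Setoid (Fin n) :=
  ⟨fun u v => strt S u = strt S v, ⟨fun _ => rfl, Eq.symm, Eq.trans⟩⟩

noncomputable instance cutSetoidDec (S : Finset (Fin n)) : DecidableRel ⇑(cutSetoid S) :=
  fun _ _ => instDecidableEqFin n _ _

noncomputable def ofCuts (S : Finset (Fin n)) : Finpartition (Finset.univ : Finset (Fin n)) :=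
  Finpartition.ofSetoid (cutSetoid S)

lemma mem_part_ofCuts {S : Finset (Fin n)} {a b : Fin n} :
    b ∈ (ofCuts S).part a ↔ strt S a = strt S b :=
  Finpartition.mem_part_ofSetoid_iff_rel

lemma ofCuts_parts_connected (S : Finset (Fin n)) :
    ∀ p ∈ (ofCuts S).parts, ((cycleGraph n).induce (p : Set (Fin n))).Connected := by
  have hn := Nat.pos_of_ne_zero (NeZero.ne n)
  intro p hp
  obtain ⟨a, ha⟩ := Finpartition.nonempty_of_mem_parts _ hp
  have hpa : (ofCuts S).part a = p := (ofCuts S).part_eq_of_mem hp ha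
  by_cases hS : S.Nonempty
  · set c := strt S a with hc
    have hcS : c ∈ S := strt_mem hS a
    have hg : ∃ k : ℕ, 0 < k ∧ c + (k : Fin n) ∈ S := ⟨n, hn, by
      rw [Fin.natCast_self, add_zero]; exact hcS⟩
    classical
    set g := Nat.find hg with hgdef
    have hgspec : 0 < g ∧ c + (g : Fin n) ∈ S := Nat.find_spec hg
    have hgmin : ∀ k < g, ¬ (0 < k ∧ c + (k : Fin n) ∈ S) := fun k hk => Nat.find_min hg hk
    have hgn : g ≤ n := Nat.find_min' hg ⟨hn, by rw [Fin.natCast_self, add_zero]; exact hcS⟩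
    have harc : p = arc c g := by
      rw [← hpa]
      ext b
      rw [mem_part_ofCuts, ← hc, mem_arc hgn]
      constructor
      · intro hb
        by_contra hge
        push_neg at hge
        set d := (b - c).val with hd
        have hdn : d < n := (b - c).isLt
        have hbc : b - (((d - g : ℕ)) : Fin n) = c + (g : Fin n) := by
          have h1 : b = c + ((d : ℕ) : Fin n) := by
            rw [hd, Fin.cast_val_eq_self, add_sub_cancel]
          rw [h1]
          have h2 : ((d : ℕ) : Fin n) - ((d - g : ℕ) : Fin n) = ((g : ℕ) : Fin n) := by
            apply Fin.ext
            have hdv : ((d : ℕ) : Fin n).val = d := by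
              rw [Fin.val_natCast, Nat.mod_eq_of_lt hdn]
            rw [val_sub_nat (by rw [hdv]; omega), hdv, Fin.val_natCast,
              Nat.mod_eq_of_lt (by omega)]
            omega
          rw [add_sub_assoc, h2]
        have := (strt_eq_iff hS).mp hb.symm
        exact this.2 (d - g) (by omega) (hbc ▸ hgspec.2)
      · intro hd
        symm
        rw [strt_eq_iff hS]
        refine ⟨hcS, ?_⟩
        intro j hj
        set d := (b - c).val with hdd
        have hdn : d < n := (b - c).isLt
        have hbj : b - ((j : ℕ) : Fin n) = c + ((d - j : ℕ) : Fin n) := by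
          have h1 : b = c + ((d : ℕ) : Fin n) := by
            rw [hdd, Fin.cast_val_eq_self, add_sub_cancel]
          rw [h1]
          have h2 : ((d : ℕ) : Fin n) - ((j : ℕ) : Fin n) = ((d - j : ℕ) : Fin n) := by
            apply Fin.ext
            have hdv : ((d : ℕ) : Fin n).val = d := by
              rw [Fin.val_natCast, Nat.mod_eq_of_lt hdn]
            rw [val_sub_nat (by rw [hdv]; omega), hdv, Fin.val_natCast,
              Nat.mod_eq_of_lt (by omega)]
          rw [add_sub_assoc, h2]
        rw [hbj]
        intro hmem
        exact hgmin (d - j) (by omega) ⟨by omega, hmem⟩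
    rw [harc]
    exact arc_connected c hgspec.1 hgn
  · have hp_univ : p = Finset.univ := by
      rw [← hpa]
      apply Finset.eq_univ_of_forall
      intro b
      rw [mem_part_ofCuts, strt_of_empty hS, strt_of_empty hS]
    rw [hp_univ, ← arc_univ (0 : Fin n)]
    exact arc_connected 0 hn le_rfl

/-- The set of cut points of a partition. -/
def cuts (P : Finpartition (Finset.univ : Finset (Fin n))) : Finset (Fin n) :=
  Finset.univ.filter fun v => v - 1 ∉ P.part v

lemma mem_cuts {P : Finpartition (Finset.univ : Finset (Fin n))} {v : Fin n} :
    v ∈ cuts P ↔ v - 1 ∉ P.part v := by simp [cuts]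

lemma val_neg_one_eq (h2 : 1 < n) : ((0 : Fin n) - 1).val = n - 1 := by
  rw [Fin.sub_def]
  simp only [Fin.val_zero, Fin.val_one', Nat.mod_eq_of_lt h2]
  rw [Nat.add_zero, Nat.mod_eq_of_lt (by omega)]

lemma cuts_ofCuts (S : Finset (Fin n)) (hS : S.card ≠ 1) : cuts (ofCuts S) = S := by
  ext v
  rw [mem_cuts, mem_part_ofCuts]
  by_cases hne : S.Nonempty
  · have h2 : 2 ≤ S.card := by
      rcases S.card.eq_zero_or_pos with h | h
      · exact absurd (Finset.card_eq_zero.mp h ▸ hne) (by simp)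
      · omega
    have hn2 : 1 < n := lt_of_lt_of_le (by omega) (le_trans h2 (by
      simpa using Finset.card_le_univ S))
    constructor
    · -- not same strt → v ∈ S
      intro hne'
      by_contra hvS
      apply hne'
      set c := strt S v with hc
      have hcS : c ∈ S := strt_mem hne v
      have hmin := strt_min hne v
      rw [← hc] at hmin
      have hd1 : 1 ≤ (v - c).val := by
        rcases Nat.eq_zero_or_pos (v - c).val with h | h
        · exact absurd (val_sub_eq_zero_iff.mp h ▸ hcS) hvS
        · omega
      symm
      rw [strt_eq_iff hne]
      refine ⟨hcS, ?_⟩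
      intro j hj
      have hval : (v - 1 - c).val = (v - c).val - 1 := by
        have h1 : v - 1 - c = (v - c) - ((1 : ℕ) : Fin n) := by push_cast; ring
        rw [h1, val_sub_nat (by omega)]
      rw [hval] at hj
      have he : v - 1 - ((j : ℕ) : Fin n) = v - ((j + 1 : ℕ) : Fin n) := by push_cast; ring
      rw [he]
      exact hmin (j + 1) (by omega)
    · -- v ∈ S → strt differs
      intro hvS heq
      rw [strt_self hne hvS] at heq
      have := (strt_eq_iff hne).mp heq.symm
      obtain ⟨s, hsS, hsv⟩ := Finset.exists_mem_ne (s := S) (by omega) v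
      have hval1 : 1 ≤ (v - s).val := by
        rcases Nat.eq_zero_or_pos (v - s).val with h | h
        · exact absurd (val_sub_eq_zero_iff.mp h) (fun e => hsv e.symm)
        · omega
      have hk : (v - 1 - s).val = (v - s).val - 1 := by
        have h1 : v - 1 - s = (v - s) - ((1 : ℕ) : Fin n) := by push_cast; ring
        rw [h1, val_sub_nat (by omega)]
      have hvv : (v - 1 - v).val = n - 1 := by
        have h1 : v - 1 - v = (0 : Fin n) - 1 := by ring
        rw [h1, val_neg_one_eq hn2]
      have hlt : (v - 1 - s).val < (v - 1 - v).val := by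
        have := (v - s).isLt
        omega
      have hmem : v - 1 - (((v - 1 - s).val : ℕ) : Fin n) ∈ S := by
        rw [Fin.cast_val_eq_self, sub_sub_cancel]; exact hsS
      exact this.2 _ hlt hmem
  · rw [strt_of_empty hne, strt_of_empty hne]
    simp only [not_true_eq_false, false_iff]
    intro hv
    exact hne ⟨v, hv⟩

lemma part_ext {P Q : Finpartition (Finset.univ : Finset (Fin n))}
    (h : ∀ a, P.part a = Q.part a) : P = Q := by
  have key : ∀ (P' Q' : Finpartition (Finset.univ : Finset (Fin n))),
      (∀ a, P'.part a = Q'.part a) → P'.parts ⊆ Q'.parts := by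
    intro P' Q' h' p hp
    obtain ⟨a, ha⟩ := P'.nonempty_of_mem_parts hp
    have : P'.part a = p := P'.part_eq_of_mem hp ha
    rw [← this, h' a]
    exact Q'.part_mem.mpr (Finset.mem_univ a)
  exact Finpartition.ext (Finset.Subset.antisymm (key P Q h) (key Q P fun a => (h a).symm))

lemma strt_cuts_mem_part {P : Finpartition (Finset.univ : Finset (Fin n))}
    (hne : (cuts P).Nonempty) (v : Fin n) : strt (cuts P) v ∈ P.part v := by
  set c := strt (cuts P) v with hc
  have hmin := strt_min hne v
  rw [← hc] at hmin
  have key : ∀ j : ℕ, j ≤ (v - c).val → v - (j : Fin n) ∈ P.part v := by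
    intro j
    induction j with
    | zero => intro _; simpa using P.mem_part (Finset.mem_univ v)
    | succ j ih =>
      intro hj
      have hjm : v - (j : Fin n) ∈ P.part v := ih (by omega)
      have hnc : v - (j : Fin n) ∉ cuts P := hmin j (by omega)
      rw [mem_cuts, not_not] at hnc
      have hpe : P.part (v - (j : Fin n)) = P.part v :=
        P.part_eq_of_mem (P.part_mem.mpr (Finset.mem_univ v)) hjm
      rw [hpe] at hnc
      have he : v - (j : Fin n) - 1 = v - ((j + 1 : ℕ) : Fin n) := by push_cast; ring
      rwa [he] at hnc
  have := key (v - c).val le_rfl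
  rwa [Fin.cast_val_eq_self, sub_sub_cancel] at this

lemma ofCuts_cuts (P : Finpartition (Finset.univ : Finset (Fin n)))
    (hP : ∀ p ∈ P.parts, ((cycleGraph n).induce (p : Set (Fin n))).Connected) :
    ofCuts (cuts P) = P := by
  apply part_ext
  intro v
  ext u
  rw [mem_part_ofCuts]
  by_cases hne : (cuts P).Nonempty
  · have hGv := strt_cuts_mem_part hne v
    have hGu := strt_cuts_mem_part hne u
    constructor
    · intro h
      rw [h] at hGv
      have h1 : P.part (strt (cuts P) u) = P.part v :=
        P.part_eq_of_mem (P.part_mem.mpr (Finset.mem_univ v)) hGv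
      have h2 : P.part (strt (cuts P) u) = P.part u :=
        P.part_eq_of_mem (P.part_mem.mpr (Finset.mem_univ u)) hGu
      rw [← h1, h2]
      exact P.mem_part (Finset.mem_univ u)
    · intro hu
      have hpp : P.part u = P.part v :=
        P.part_eq_of_mem (P.part_mem.mpr (Finset.mem_univ v)) hu
      have hc := hP _ (P.part_mem.mpr (Finset.mem_univ v))
      have hcv : strt (cuts P) v ∈ cuts P := strt_mem hne v
      have hcu : strt (cuts P) u ∈ cuts P := strt_mem hne u
      rw [mem_cuts] at hcv hcu
      rw [P.part_eq_of_mem (P.part_mem.mpr (Finset.mem_univ v)) hGv] at hcv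
      rw [hpp] at hGu
      rw [P.part_eq_of_mem (P.part_mem.mpr (Finset.mem_univ v)) hGu] at hcu
      exact start_unique hc hGv hcv hGu hcu
  · -- no cuts: every part is everything
    have hall : ∀ w : Fin n, w - 1 ∈ P.part w := by
      intro w
      by_contra hw
      exact hne ⟨w, mem_cuts.mpr hw⟩
    have huniv : P.part v = Finset.univ := by
      apply closed_pred_eq_univ ⟨v, P.mem_part (Finset.mem_univ v)⟩
      intro w hw
      have := hall w
      rwa [P.part_eq_of_mem (P.part_mem.mpr (Finset.mem_univ v)) hw] at this
    rw [strt_of_empty hne, strt_of_empty hne, huniv]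
    simp

lemma cuts_card_ne_one (P : Finpartition (Finset.univ : Finset (Fin n)))
    (hP : ∀ p ∈ P.parts, ((cycleGraph n).induce (p : Set (Fin n))).Connected) :
    (cuts P).card ≠ 1 := by
  intro h1
  obtain ⟨v, hv⟩ := Finset.card_eq_one.mp h1
  have hvc : v ∈ cuts P := by rw [hv]; exact Finset.mem_singleton_self v
  rw [mem_cuts] at hvc
  have hc := hP _ (P.part_mem.mpr (Finset.mem_univ v))
  have hvp : v ∈ P.part v := P.mem_part (Finset.mem_univ v)
  have harc : P.part v = arc v (P.part v).card := connected_eq_arc hc hvp hvc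
  set k := (P.part v).card with hk
  have hk1 : 1 ≤ k := Finset.card_pos.mpr ⟨v, hvp⟩
  have hkn : k ≤ n := by
    have := Finset.card_le_univ (P.part v)
    simpa [← hk] using this
  have hkn' : k < n := by
    rcases Nat.lt_or_ge k n with h | h
    · exact h
    · exfalso
      have : k = n := by omega
      rw [this, arc_univ] at harc
      rw [harc] at hvc
      exact hvc (Finset.mem_univ _)
  set w := v + ((k : ℕ) : Fin n) with hw
  have hwv : (w - v).val = k := by
    rw [hw, add_sub_cancel_left, Fin.val_natCast, Nat.mod_eq_of_lt hkn']
  have hwnp : w ∉ P.part v := by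
    rw [harc, mem_arc hkn, hwv]
    omega
  have hw1p : w - 1 ∈ P.part v := by
    rw [harc, mem_arc hkn]
    have : (w - 1 - v).val = k - 1 := by
      have he : w - 1 - v = (w - v) - ((1 : ℕ) : Fin n) := by push_cast; ring
      rw [he, val_sub_nat (by omega), hwv]
    omega
  have hwc : w ∈ cuts P := by
    rw [mem_cuts]
    intro hmem
    have h1 : P.part (w - 1) = P.part w :=
      P.part_eq_of_mem (P.part_mem.mpr (Finset.mem_univ w)) hmem
    have h2 : P.part (w - 1) = P.part v :=
      P.part_eq_of_mem (P.part_mem.mpr (Finset.mem_univ v)) hw1p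
    have : w ∈ P.part v := by
      rw [← h2, h1]
      exact P.mem_part (Finset.mem_univ w)
    exact hwnp this
  have hwv' : w ≠ v := by
    intro he
    rw [he] at hwv
    simp at hwv
    omega
  rw [hv, Finset.mem_singleton] at hwc
  exact hwv' hwc

end CycComp

/-- The cycle graph on `n ≥ 1` vertices has exactly `2^n - n` graph compositions. -/
theorem numGraphCompositions_cycleGraph (n : ℕ) (hn : 1 ≤ n) :
    numGraphCompositions (SimpleGraph.cycleGraph n) = 2 ^ n - n := by
  haveI : NeZero n := ⟨by omega⟩
  rw [numGraphCompositions]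
  have e : {P : Finpartition (Finset.univ : Finset (Fin n)) //
      ∀ s ∈ P.parts, ((SimpleGraph.cycleGraph n).induce (s : Set (Fin n))).Connected} ≃
      {S : Finset (Fin n) // S.card ≠ 1} :=
    { toFun := fun P => ⟨CycComp.cuts P.1, CycComp.cuts_card_ne_one P.1 P.2⟩
      invFun := fun S => ⟨CycComp.ofCuts S.1, CycComp.ofCuts_parts_connected S.1⟩
      left_inv := fun P => Subtype.ext (CycComp.ofCuts_cuts P.1 P.2)
      right_inv := fun S => Subtype.ext (CycComp.cuts_ofCuts S.1 S.2) }
  rw [Nat.card_congr e, Nat.card_eq_fintype_card, Fintype.card_subtype_compl,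
    Fintype.card_finset, Fintype.card_fin]
  congr 1
  rw [Fintype.card_subtype]
  have : Finset.univ.filter (fun S : Finset (Fin n) => S.card = 1) =
      Finset.powersetCard 1 (Finset.univ : Finset (Fin n)) := by
    rw [Finset.powersetCard_eq_filter, Finset.powerset_univ]
  rw [this, Finset.card_powersetCard, Finset.card_univ, Fintype.card_fin, Nat.choose_one_right]
end

section
/- Let C*_k(n) be the number of compositions of n (into any number of positive parts) in which no part equals k. Then C*_k(n) = 2C*_k(n-1) - C*_k(n-k) + C*_k(n-k-1) for n ≥ k+2. -/
/-- `C*_k(n)`: the number of compositions of `n` (finite sequences of positive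
integers summing to `n`) in which no part equals `k`. -/
noncomputable def compositionsAvoiding (k n : ℕ) : ℕ :=
  Nat.card {l : List ℕ // l.sum = n ∧ (∀ x ∈ l, 0 < x) ∧ ∀ x ∈ l, x ≠ k}

/-- The finset of compositions of `n` avoiding the part `k`. -/
def avoidFinset (k n : ℕ) : Finset (List ℕ) :=
  ((Finset.univ : Finset (Composition n)).image Composition.blocks).filter
    (fun l => ∀ x ∈ l, x ≠ k)

lemma mem_avoidFinset {k n : ℕ} {l : List ℕ} :
    l ∈ avoidFinset k n ↔ l.sum = n ∧ (∀ x ∈ l, 0 < x) ∧ ∀ x ∈ l, x ≠ k := by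
  simp only [avoidFinset, Finset.mem_filter, Finset.mem_image, Finset.mem_univ, true_and]
  constructor
  · rintro ⟨⟨c, rfl⟩, h⟩
    exact ⟨c.blocks_sum, fun x hx => c.blocks_pos hx, h⟩
  · rintro ⟨hs, hp, hk⟩
    exact ⟨⟨⟨l, fun {x} hx => hp x hx, hs⟩, rfl⟩, hk⟩

lemma compositionsAvoiding_eq_card (k n : ℕ) :
    compositionsAvoiding k n = (avoidFinset k n).card := by
  rw [compositionsAvoiding, ← Nat.card_eq_finsetCard]
  exact Nat.card_congr (Equiv.subtypeEquivRight (fun l => mem_avoidFinset.symm))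

lemma avoidFinset_card_rec (k n : ℕ) (hn : 1 ≤ n) :
    (avoidFinset k n).card =
      ∑ j ∈ (Finset.Icc 1 n).erase k, (avoidFinset k (n - j)).card := by
  have hset : avoidFinset k n =
      ((Finset.Icc 1 n).erase k).biUnion
        (fun j => (avoidFinset k (n - j)).image (List.cons j)) := by
    ext l
    simp only [Finset.mem_biUnion, Finset.mem_erase, Finset.mem_Icc, Finset.mem_image,
      mem_avoidFinset]
    constructor
    · rintro ⟨hs, hp, hk⟩
      match l with
      | [] => simp at hs; omega
      | a :: t =>
        have ha : 0 < a := hp a (by simp)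
        have hat : a + t.sum = n := by simpa using hs
        refine ⟨a, ⟨hk a (by simp), ha, by omega⟩, t, ⟨by omega, ?_, ?_⟩, rfl⟩
        · exact fun x hx => hp x (by simp [hx])
        · exact fun x hx => hk x (by simp [hx])
    · rintro ⟨j, ⟨hjk, hj1, hjn⟩, t, ⟨hts, htp, htk⟩, rfl⟩
      refine ⟨by simp [hts]; omega, ?_, ?_⟩
      · intro x hx
        rcases List.mem_cons.1 hx with rfl | hx
        · exact hj1
        · exact htp x hx
      · intro x hx
        rcases List.mem_cons.1 hx with rfl | hx
        · exact hjk
        · exact htk x hx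
  rw [hset, Finset.card_biUnion, Finset.sum_congr rfl]
  · intro j _
    exact Finset.card_image_of_injective _ (fun a b h => by injection h)
  · intro i _ j _ hij
    simp only [Finset.disjoint_left, Finset.mem_image]
    rintro l ⟨t, _, rfl⟩ ⟨t', _, h⟩
    injection h with h1 _
    exact hij h1.symm

/-- `C*_k(n) = 2C*_k(n-1) - C*_k(n-k) + C*_k(n-k-1)` for `n ≥ k+2`. -/
theorem compositionsAvoiding_rec (k n : ℕ) (hk : 1 ≤ k) (hn : k + 2 ≤ n) :
    (compositionsAvoiding k n : ℤ) =
      2 * compositionsAvoiding k (n - 1) - compositionsAvoiding k (n - k) +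
        compositionsAvoiding k (n - k - 1) := by
  set c : ℕ → ℤ := fun m => ((avoidFinset k m).card : ℤ) with hc
  have hCA : ∀ m, (compositionsAvoiding k m : ℤ) = c m := by
    intro m; rw [compositionsAvoiding_eq_card]
  set T : ℕ → ℤ := fun m => ∑ i ∈ Finset.range m, c i with hT
  have key : ∀ m, k ≤ m → c m = T m - c (m - k) := by
    intro m hm
    have h1 : c m = ∑ j ∈ (Finset.Icc 1 m).erase k, c (m - j) := by
      simp only [hc]
      exact_mod_cast avoidFinset_card_rec k m (le_trans hk hm)
    have hkmem : k ∈ Finset.Icc 1 m := Finset.mem_Icc.2 ⟨hk, hm⟩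
    have h2 : ∑ j ∈ (Finset.Icc 1 m).erase k, c (m - j)
        = (∑ j ∈ Finset.Icc 1 m, c (m - j)) - c (m - k) :=
      Finset.sum_erase_eq_sub hkmem
    have h3 : ∑ j ∈ Finset.Icc 1 m, c (m - j) = T m := by
      rw [← Finset.Ico_add_one_right_eq_Icc, Finset.sum_Ico_eq_sum_range]
      simp only [hT, Nat.add_sub_cancel]
      calc ∑ i ∈ Finset.range m, c (m - (1 + i))
          = ∑ i ∈ Finset.range m, c (m - 1 - i) := by
            refine Finset.sum_congr rfl fun i _ => ?_
            congr 1; omega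
        _ = ∑ i ∈ Finset.range m, c i := Finset.sum_range_reflect c m
    rw [h1, h2, h3]
  have e1 : c n = T n - c (n - k) := key n (by omega)
  have e2 : c (n - 1) = T (n - 1) - c (n - 1 - k) := key (n - 1) (by omega)
  have e3 : T n = T (n - 1) + c (n - 1) := by
    have : n = (n - 1) + 1 := by omega
    rw [this, hT]
    exact Finset.sum_range_succ c (n - 1)
  have e4 : n - 1 - k = n - k - 1 := by omega
  rw [hCA, hCA, hCA, hCA]
  rw [e4] at e2
  linarith [e1, e2, e3]
end
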